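/- arXiv:1103.4051 — 7 statements merged into one kernel-verified Lean document; each statement's English description precedes it below -/
import Mathlib

section
/- For the Thue-Morse word u_TM, with R the reversal antimorphism and E the exchange antimorphism of {0,1}* (E(0) = 1, E(1) = 0, composed with reversal), the equality ΔC(n) + 4 = P_R(n) + P_R(n+1) + P_E(n) + P_E(n+1) holds for all n ≥ 1. -/
open scoped Classical

/-- The finite word `w` occurs in the infinite word `u` at position `i`. -/
def OccursAt {A : Type*} (u : ℕ → A) (w : List A) (i : ℕ) : Prop :=
  w = (List.range w.length).map fun k => u (i + k)

/-- The finite word `w` is a factor of the infinite word `u`. -/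
def IsFactor {A : Type*} (u : ℕ → A) (w : List A) : Prop :=
  ∃ i, OccursAt u w i

/-- The (involutive) antimorphism of `A*` induced by the letter map `θ`:
it reverses a word and applies `θ` letterwise. -/
def antim {A : Type*} (θ : A → A) (w : List A) : List A :=
  (w.map θ).reverse

/-- `w` is a `θ`-palindrome, i.e. a fixed point of the antimorphism induced by `θ`. -/
def IsPalin {A : Type*} (θ : A → A) (w : List A) : Prop :=
  antim θ w = w

/-- Factor complexity of the infinite word `u`. -/
noncomputable def fC {A : Type*} (u : ℕ → A) (n : ℕ) : ℕ :=
  Set.ncard {w : List A | w.length = n ∧ IsFactor u w}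

/-- `θ`-palindromic complexity of the infinite word `u`. -/
noncomputable def fP {A : Type*} (u : ℕ → A) (θ : A → A) (n : ℕ) : ℕ :=
  Set.ncard {w : List A | w.length = n ∧ IsFactor u w ∧ IsPalin θ w}

/-- `γ_Θ(w)`: the number of pairs `{a, θ a}` with `a` occurring in `w` and `a ≠ θ a`. -/
noncomputable def gammaTheta {A : Type*} (θ : A → A) (w : List A) : ℕ :=
  Set.ncard {s : Set A | ∃ a ∈ w, θ a ≠ a ∧ s = {a, θ a}}

/-- The set of `θ`-palindromic factors of the finite word `w`. -/
def palFactors {A : Type*} (θ : A → A) (w : List A) : Set (List A) :=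
  {p | p <:+: w ∧ IsPalin θ p}

/-- The `Θ`-defect of a finite word `w`. -/
noncomputable def defect {A : Type*} (θ : A → A) (w : List A) : ℤ :=
  (w.length : ℤ) + 1 - gammaTheta θ w - Set.ncard (palFactors θ w)

/-- The number of occurrences of `w` in the finite word `v`. -/
noncomputable def numOcc {A : Type*} (w v : List A) : ℕ :=
  Set.ncard {i : ℕ | i + w.length ≤ v.length ∧ w <+: v.drop i}

/-- The Thue-Morse word over `{0,1}` (`false = 0`, `true = 1`): its `n`-th letter is
the parity of the sum of binary digits of `n`. -/
def tm : ℕ → Bool := fun n => (Nat.digits 2 n).sum % 2 == 1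


def tmAux : ℕ → ℕ → Bool
  | 0, _ => false
  | f+1, n => if n = 0 then false else ((tmAux f (n/2)).xor (decide (n % 2 = 1)))

def tmF (n : ℕ) : Bool := tmAux n n

lemma tmAux_eq : ∀ n f f', n ≤ f → n ≤ f' → tmAux f n = tmAux f' n := by
  intro n
  induction n using Nat.strong_induction_on with
  | _ n ih =>
    intro f f' h h'
    match f, f' with
    | 0, 0 => rfl
    | 0, g+1 =>
      interval_cases n
      simp [tmAux]
    | g+1, 0 =>
      interval_cases n
      simp [tmAux]
    | g+1, g'+1 =>
      by_cases hn : n = 0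
      · simp [tmAux, hn]
      · simp only [tmAux, if_neg hn]
        rw [ih (n/2) (by omega) g g' (by omega) (by omega)]

lemma tm_rec (n : ℕ) (hn : n ≠ 0) : tm n = (tm (n/2)).xor (decide (n % 2 = 1)) := by
  unfold tm
  rw [Nat.digits_def' (by norm_num : 1 < 2) (Nat.pos_of_ne_zero hn)]
  rcases Nat.mod_two_eq_zero_or_one n with h1 | h1 <;>
    rcases Nat.mod_two_eq_zero_or_one ((Nat.digits 2 (n/2)).sum) with h2 | h2 <;>
      simp [h1, List.sum_cons, Nat.add_mod, h2]

lemma tm_eq_tmF : tm = tmF := by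
  funext n
  induction n using Nat.strong_induction_on with
  | _ n ih =>
    by_cases hn : n = 0
    · subst hn; simp [tm, tmF, tmAux]
    · rw [tm_rec n hn, ih (n/2) (by omega)]
      show _ = tmAux n n
      obtain ⟨g, rfl⟩ : ∃ g, n = g + 1 := ⟨n - 1, by omega⟩
      simp only [tmAux, if_neg hn]
      rw [tmAux_eq ((g+1)/2) g ((g+1)/2) (by omega) (le_refl _)]
      rfl

lemma tmF_even (k : ℕ) : tmF (2*k) = tmF k := by
  rw [← tm_eq_tmF]
  by_cases hk : k = 0
  · subst hk; rfl
  · rw [tm_rec (2*k) (by omega)]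
    have : 2*k/2 = k := by omega
    have h2 : 2*k % 2 = 0 := by omega
    simp [this, h2, tm_eq_tmF]

lemma tmF_odd (k : ℕ) : tmF (2*k+1) = !tmF k := by
  rw [← tm_eq_tmF, tm_rec (2*k+1) (by omega)]
  have : (2*k+1)/2 = k := by omega
  have h2 : (2*k+1) % 2 = 1 := by omega
  simp [this, h2, tm_eq_tmF, Bool.xor_true]

def W (n i : ℕ) : List Bool := (List.range n).map fun k => tmF (i + k)

lemma W_length (n i : ℕ) : (W n i).length = n := by simp [W]

lemma W_zero (i : ℕ) : W 0 i = [] := rfl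

lemma W_succ (n i : ℕ) : W (n+1) i = W n i ++ [tmF (i+n)] := by
  simp [W, List.range_succ]

lemma W_cons (n i : ℕ) : W (n+1) i = tmF i :: W n (i+1) := by
  simp only [W, List.range_succ_eq_map, List.map_cons, List.map_map]
  refine List.cons_eq_cons.mpr ⟨by simp, ?_⟩
  apply List.map_congr_left
  intro k _
  simp only [Function.comp]
  congr 1
  omega

lemma W_getElem (n i j : ℕ) (h : j < n) : (W n i)[j]'(by simp [W_length, h]) = tmF (i + j) := by
  simp [W]

lemma W_take (m n i : ℕ) (h : m ≤ n) : (W n i).take m = W m i := by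
  simp [W, ← List.map_take, List.take_range, Nat.min_eq_left h]

lemma W_dropLast (n i : ℕ) : (W (n+1) i).dropLast = W n i := by
  rw [W_succ]; simp

lemma W_tail (n i : ℕ) : (W (n+1) i).tail = W n (i+1) := by
  rw [W_cons]; simp

def phi : List Bool → List Bool
  | [] => []
  | a :: t => a :: (!a) :: phi t

@[simp] lemma phi_nil : phi [] = [] := rfl
@[simp] lemma phi_cons (a : Bool) (t : List Bool) : phi (a :: t) = a :: (!a) :: phi t := rfl

lemma phi_append (x y : List Bool) : phi (x ++ y) = phi x ++ phi y := by
  induction x with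
  | nil => rfl
  | cons a t ih => simp [ih]

@[simp] lemma phi_length (x : List Bool) : (phi x).length = 2 * x.length := by
  induction x with
  | nil => rfl
  | cons a t ih => simp [ih]; omega

lemma phi_inj : Function.Injective phi := by
  intro x
  induction x with
  | nil => intro y h; cases y with
    | nil => rfl
    | cons b s => simp [phi] at h
  | cons a t ih =>
    intro y h
    cases y with
    | nil => simp [phi] at h
    | cons b s =>
      simp only [phi_cons, List.cons.injEq] at h
      obtain ⟨h1, _, h3⟩ := h
      rw [h1, ih h3]

lemma phi_W (n k : ℕ) : phi (W n k) = W (2*n) (2*k) := by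
  induction n with
  | zero => rfl
  | succ n ih =>
    rw [W_succ, phi_append, ih]
    have e1 : 2*(n+1) = (2*n+1)+1 := by ring
    rw [e1, W_succ, W_succ]
    have e2 : 2*k + (2*n+1) = 2*(k+n)+1 := by ring
    have e3 : 2*k + 2*n = 2*(k+n) := by ring
    simp [phi, e2, e3, tmF_even, tmF_odd]

-- the maps
def fL (u : List Bool) : List Bool := (phi u).dropLast
def fR (u : List Bool) : List Bool := (phi u).tail
def fM (u : List Bool) : List Bool := ((phi u).tail).dropLast

lemma phi_concat (x : List Bool) (a : Bool) : phi (x ++ [a]) = phi x ++ [a, !a] := by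
  rw [phi_append]; rfl

lemma fL_closed (x : List Bool) (a : Bool) : fL (x ++ [a]) = phi x ++ [a] := by
  rw [fL, phi_concat]
  rw [show phi x ++ [a, !a] = (phi x ++ [a]) ++ [!a] by simp]
  exact List.dropLast_concat

lemma fR_closed (a : Bool) (t : List Bool) : fR (a :: t) = (!a) :: phi t := rfl

lemma fM_closed (a : Bool) (x : List Bool) (b : Bool) :
    fM (a :: (x ++ [b])) = (!a) :: (phi x ++ [b]) := by
  show ((a :: (!a) :: phi (x ++ [b])).tail).dropLast = _
  rw [phi_concat]
  simp only [List.tail_cons]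
  rw [show (!a) :: (phi x ++ [b, !b]) = ((!a) :: (phi x ++ [b])) ++ [!b] by simp]
  exact List.dropLast_concat

lemma fL_inj {x y : List Bool} (hl : x.length = y.length) (h : fL x = fL y) : x = y := by
  rcases List.eq_nil_or_concat x with rfl | ⟨x', a, rfl⟩
  · rcases List.eq_nil_or_concat y with rfl | ⟨y', b, rfl⟩
    · rfl
    · exfalso; simp only [List.concat_eq_append] at hl; simp at hl
  · rcases List.eq_nil_or_concat y with rfl | ⟨y', b, rfl⟩
    · exfalso; simp only [List.concat_eq_append] at hl; simp at hl
    · simp only [List.concat_eq_append] at *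
      rw [fL_closed, fL_closed] at h
      have hlen : (phi x').length = (phi y').length := by
        rw [phi_length, phi_length]; simp at hl; omega
      obtain ⟨h1, h2⟩ := List.append_inj h hlen
      rw [phi_inj h1]
      simp at h2; rw [h2]

lemma fR_inj {x y : List Bool} (hl : x.length = y.length) (h : fR x = fR y) : x = y := by
  cases x with
  | nil => cases y with
    | nil => rfl
    | cons b s => simp at hl
  | cons a t =>
    cases y with
    | nil => simp at hl
    | cons b s =>
      rw [fR_closed, fR_closed] at h
      simp only [List.cons.injEq] at h
      obtain ⟨h1, h2⟩ := h
      rw [Bool.not_inj h1, phi_inj h2]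

lemma fM_inj {x y : List Bool} (hl : x.length = y.length) (h2 : 2 ≤ x.length)
    (h : fM x = fM y) : x = y := by
  cases x with
  | nil => simp at h2
  | cons a t =>
    cases y with
    | nil => simp at hl
    | cons b s =>
      rcases List.eq_nil_or_concat t with rfl | ⟨x', c, rfl⟩
      · simp at h2
      · rcases List.eq_nil_or_concat s with rfl | ⟨y', d, rfl⟩
        · exfalso; simp only [List.concat_eq_append] at hl; simp [List.length_append] at hl <;> omega
        · simp only [List.concat_eq_append] at *
          rw [fM_closed, fM_closed] at h
          simp only [List.cons.injEq] at h
          obtain ⟨h1, h2'⟩ := h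
          have hlen : (phi x').length = (phi y').length := by
            rw [phi_length, phi_length]; simp at hl; omega
          obtain ⟨h3, h4⟩ := List.append_inj h2' hlen
          simp at h4
          rw [Bool.not_inj h1, phi_inj h3, h4]

-- reversal transfer
lemma antim_id_eq (w : List Bool) : antim id w = w.reverse := by simp [antim]

lemma antim_not_concat (x : List Bool) (a : Bool) :
    antim Bool.not (x ++ [a]) = (!a) :: antim Bool.not x := by simp [antim]

lemma rev_phi (v : List Bool) : (phi v).reverse = phi (antim Bool.not v) := by
  induction v with
  | nil => rfl
  | cons a t ih =>
    show (a :: (!a) :: phi t).reverse = _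
    have : antim Bool.not (a :: t) = antim Bool.not t ++ [!a] := by simp [antim]
    rw [this, phi_concat]
    simp [ih]

lemma map_not_phi (v : List Bool) : (phi v).map Bool.not = phi (v.map Bool.not) := by
  induction v with
  | nil => rfl
  | cons a t ih => simp [phi, ih, Bool.not_not]

lemma antim_id_phi (v : List Bool) : antim id (phi v) = phi (antim Bool.not v) := by
  rw [antim_id_eq, rev_phi]

lemma antim_not_phi (v : List Bool) : antim Bool.not (phi v) = phi (antim id v) := by
  show ((phi v).map Bool.not).reverse = _
  rw [map_not_phi, rev_phi]
  congr 1
  simp only [antim, List.map_map, Function.comp_def, Bool.not_not, List.map_id', antim_id_eq, id_eq, List.map_id]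

lemma antim_length {A : Type*} (θ : A → A) (w : List A) : (antim θ w).length = w.length := by
  simp [antim]

lemma antim_id_fM (a : Bool) (x : List Bool) (b : Bool) :
    antim id (fM (a :: (x ++ [b]))) = fM (antim Bool.not (a :: (x ++ [b]))) := by
  have h1 : antim Bool.not (a :: (x ++ [b])) = (!b) :: (antim Bool.not x ++ [!a]) := by
    simp [antim]
  rw [h1, fM_closed, fM_closed, antim_id_eq]
  simp [rev_phi]

lemma antim_not_fM (a : Bool) (x : List Bool) (b : Bool) :
    antim Bool.not (fM (a :: (x ++ [b]))) = fM (antim id (a :: (x ++ [b]))) := by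
  have h1 : antim id (a :: (x ++ [b])) = b :: (x.reverse ++ [a]) := by simp [antim]
  rw [h1, fM_closed, fM_closed]
  show ((((!a) :: (phi x ++ [b])).map Bool.not).reverse) = _
  simp only [List.map_cons, List.map_append, map_not_phi, List.map_cons, List.map_nil]
  rw [show (!!a) = a by simp]
  simp only [List.reverse_cons, List.reverse_append, rev_phi]
  have : antim Bool.not (x.map Bool.not) = x.reverse := by
    simp only [antim, List.map_map, Function.comp_def, Bool.not_not, List.map_id']
  rw [this]
  simp

-- parity
lemma noConst3 (k : ℕ) : ¬(tmF k = tmF (k+1) ∧ tmF (k+1) = tmF (k+2)) := by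
  rintro ⟨h1, h2⟩
  rcases Nat.even_or_odd k with ⟨m, rfl⟩ | ⟨m, rfl⟩
  · rw [show m + m = 2*m by ring] at h1
    rw [show 2*m+1 = 2*m+1 from rfl] at h1
    rw [tmF_even, tmF_odd] at h1
    cases tmF m <;> simp_all
  · rw [show 2*m+1+1 = 2*(m+1) by ring, show 2*m+1+2 = 2*(m+1)+1 by ring,
      tmF_even, tmF_odd] at h2
    cases tmF (m+1) <;> simp_all

lemma W4_explicit (i : ℕ) : W 4 i = [tmF i, tmF (i+1), tmF (i+2), tmF (i+3)] := by
  have : List.range 4 = [0,1,2,3] := rfl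
  simp [W, this]

lemma parity4 (k j : ℕ) : W 4 (2*k) ≠ W 4 (2*j+1) := by
  intro h
  rw [W4_explicit, W4_explicit] at h
  simp only [List.cons.injEq, and_true] at h
  obtain ⟨e1, e2, e3, e4⟩ := h
  rw [tmF_even, tmF_odd] at e1
  rw [tmF_odd, show 2*j+1+1 = 2*(j+1) by ring, tmF_even] at e2
  rw [show 2*k+2 = 2*(k+1) by ring, tmF_even, show 2*j+1+2 = 2*(j+1)+1 by ring, tmF_odd] at e3
  rw [show 2*k+3 = 2*(k+1)+1 by ring, tmF_odd, show 2*j+1+3 = 2*(j+2) by ring, tmF_even] at e4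
  have hn := noConst3 j
  rw [show j+1+1 = j+2 from rfl] at hn
  revert e1 e2 e3 e4 hn
  cases tmF k <;> cases tmF j <;> cases tmF (k+1) <;> cases tmF (j+1) <;> cases tmF (j+2) <;> simp

lemma W_parity {m i j : ℕ} (hm : 4 ≤ m) (h : W m i = W m j) : i % 2 = j % 2 := by
  have h4 : W 4 i = W 4 j := by rw [← W_take 4 m i hm, ← W_take 4 m j hm, h]
  rcases Nat.even_or_odd i with ⟨k, hk⟩ | ⟨k, hk⟩ <;>
    rcases Nat.even_or_odd j with ⟨l, hl⟩ | ⟨l, hl⟩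
  · omega
  · exfalso; exact parity4 k l (by rw [show 2*k = k+k by ring, ← hk, show 2*l+1 = l+l+1 by ring, ← hl] at *; exact h4)
  · exfalso; exact parity4 l k (by rw [show 2*l = l+l by ring, ← hl, show 2*k+1 = k+k+1 by ring, ← hk] at *; exact h4.symm)
  · omega



def Lset (n : ℕ) : Set (List Bool) := {w | w.length = n ∧ IsFactor tm w}

lemma mem_Lset_iff {w : List Bool} {n : ℕ} : w ∈ Lset n ↔ ∃ i, w = W n i := by
  constructor
  · rintro ⟨hl, i, hocc⟩
    exact ⟨i, by rw [hocc, tm_eq_tmF]; unfold W; rw [show w.length = n from hl]⟩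
  · rintro ⟨i, rfl⟩
    refine ⟨W_length n i, i, ?_⟩
    unfold OccursAt
    rw [tm_eq_tmF, W_length]
    rfl

lemma Lset_finite (n : ℕ) : (Lset n).Finite := by
  apply Set.Finite.subset (List.finite_length_eq Bool n)
  intro w hw
  exact hw.1

lemma WM (n k : ℕ) : fM (W (n+1) k) = W (2*n) (2*k+1) := by
  unfold fM
  rw [phi_W, show 2*(n+1) = (2*n+1)+1 by ring]
  rw [show (W (2*n+1+1) (2*k)) = W ((2*n+1)+1) (2*k) from rfl, W_tail, W_dropLast]

lemma WL (n k : ℕ) : fL (W (n+1) k) = W (2*n+1) (2*k) := by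
  unfold fL
  rw [phi_W, show 2*(n+1) = (2*n+1)+1 by ring, W_dropLast]

lemma WR (n k : ℕ) : fR (W (n+1) k) = W (2*n+1) (2*k+1) := by
  unfold fR
  rw [phi_W, show 2*(n+1) = (2*n+1)+1 by ring, W_tail]

lemma exists_cons_concat {u : List Bool} (h : 2 ≤ u.length) :
    ∃ a x b, u = a :: (x ++ [b]) := by
  cases u with
  | nil => simp at h
  | cons a t =>
    rcases List.eq_nil_or_concat t with rfl | ⟨x, b, rfl⟩
    · simp at h
    · exact ⟨a, x, b, by simp⟩

lemma ncard_split (n : ℕ) (hn : 2 ≤ n) (P Q : List Bool → Prop)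
    (h1 : ∀ v : List Bool, (P (phi v) ↔ Q v))
    (h2 : ∀ u : List Bool, u.length = n + 1 → (P (fM u) ↔ Q u)) :
    {w | w ∈ Lset (2*n) ∧ P w}.ncard =
      {v | v ∈ Lset n ∧ Q v}.ncard + {u | u ∈ Lset (n+1) ∧ Q u}.ncard := by
  have hset : {w | w ∈ Lset (2*n) ∧ P w} =
      phi '' {v | v ∈ Lset n ∧ Q v} ∪ fM '' {u | u ∈ Lset (n+1) ∧ Q u} := by
    ext w
    constructor
    · rintro ⟨hw, hP⟩
      obtain ⟨i, rfl⟩ := mem_Lset_iff.mp hw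
      rcases Nat.even_or_odd i with ⟨k, hk⟩ | ⟨k, hk⟩
      · left
        have hik : i = 2*k := by omega
        subst hik
        refine ⟨W n k, ⟨mem_Lset_iff.mpr ⟨k, rfl⟩, ?_⟩, phi_W n k⟩
        rw [← h1 (W n k), phi_W]
        exact hP
      · right
        have hik : i = 2*k+1 := by omega
        subst hik
        refine ⟨W (n+1) k, ⟨mem_Lset_iff.mpr ⟨k, rfl⟩, ?_⟩, WM n k⟩
        rw [← h2 (W (n+1) k) (W_length _ _), WM]
        exact hP
    · rintro (⟨v, ⟨hv, hQ⟩, rfl⟩ | ⟨u, ⟨hu, hQ⟩, rfl⟩)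
      · obtain ⟨k, rfl⟩ := mem_Lset_iff.mp hv
        rw [phi_W]
        exact ⟨mem_Lset_iff.mpr ⟨2*k, rfl⟩, by rw [← phi_W, h1]; exact hQ⟩
      · obtain ⟨k, rfl⟩ := mem_Lset_iff.mp hu
        rw [WM]
        exact ⟨mem_Lset_iff.mpr ⟨2*k+1, rfl⟩,
          by rw [← WM, h2 (W (n+1) k) (W_length _ _)]; exact hQ⟩
  have hfin1 : {v | v ∈ Lset n ∧ Q v}.Finite :=
    (Lset_finite n).subset (fun v hv => hv.1)
  have hfin2 : {u | u ∈ Lset (n+1) ∧ Q u}.Finite :=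
    (Lset_finite (n+1)).subset (fun u hu => hu.1)
  have hdisj : Disjoint (phi '' {v | v ∈ Lset n ∧ Q v}) (fM '' {u | u ∈ Lset (n+1) ∧ Q u}) := by
    rw [Set.disjoint_left]
    rintro x ⟨v, ⟨hv, -⟩, rfl⟩ ⟨u, ⟨hu, -⟩, hux⟩
    obtain ⟨k, rfl⟩ := mem_Lset_iff.mp hv
    obtain ⟨k', rfl⟩ := mem_Lset_iff.mp hu
    rw [WM] at hux
    rw [phi_W] at hux
    have := W_parity (by omega : 4 ≤ 2*n) hux.symm
    omega
  rw [hset, Set.ncard_union_eq hdisj (hfin1.image _) (hfin2.image _),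
    Set.ncard_image_of_injOn (phi_inj.injOn),
    Set.ncard_image_of_injOn ?_]
  intro u hu u' hu' h
  exact fM_inj (by rw [hu.1.1, hu'.1.1]) (by rw [hu.1.1]; omega) h

lemma fC_eq (m : ℕ) : fC tm m = (Lset m).ncard := rfl

lemma fP_eq (θ : Bool → Bool) (m : ℕ) :
    fP tm θ m = {w | w ∈ Lset m ∧ IsPalin θ w}.ncard := by
  unfold fP
  congr 1
  ext w
  simp only [Lset, Set.mem_setOf_eq, and_assoc]

lemma R1 {n : ℕ} (hn : 2 ≤ n) : fC tm (2*n) = fC tm n + fC tm (n+1) := by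
  rw [fC_eq, fC_eq, fC_eq]
  have := ncard_split n hn (fun _ => True) (fun _ => True) (by simp) (by simp)
  simpa using this

lemma R3 {n : ℕ} (hn : 2 ≤ n) :
    fP tm id (2*n) = fP tm Bool.not n + fP tm Bool.not (n+1) := by
  rw [fP_eq, fP_eq, fP_eq]
  apply ncard_split n hn
  · intro v
    unfold IsPalin
    rw [antim_id_phi]
    exact ⟨fun h => phi_inj h, fun h => by rw [h]⟩
  · intro u hu
    obtain ⟨a, x, b, rfl⟩ := exists_cons_concat (u := u) (by omega)
    unfold IsPalin
    rw [antim_id_fM]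
    constructor
    · intro h
      exact fM_inj (x := antim Bool.not (a :: (x ++ [b]))) (y := a :: (x ++ [b]))
        (antim_length _ _) (by rw [antim_length]; simp) h
    · intro h; rw [h]

lemma R4 {n : ℕ} (hn : 2 ≤ n) :
    fP tm Bool.not (2*n) = fP tm id n + fP tm id (n+1) := by
  rw [fP_eq, fP_eq, fP_eq]
  apply ncard_split n hn
  · intro v
    unfold IsPalin
    rw [antim_not_phi]
    exact ⟨fun h => phi_inj h, fun h => by rw [h]⟩
  · intro u hu
    obtain ⟨a, x, b, rfl⟩ := exists_cons_concat (u := u) (by omega)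
    unfold IsPalin
    rw [antim_not_fM]
    constructor
    · intro h
      exact fM_inj (x := antim id (a :: (x ++ [b]))) (y := a :: (x ++ [b]))
        (antim_length _ _) (by rw [antim_length]; simp) h
    · intro h; rw [h]

lemma R2 {n : ℕ} (hn : 2 ≤ n) : fC tm (2*n+1) = 2 * fC tm (n+1) := by
  rw [fC_eq, fC_eq]
  have hset : Lset (2*n+1) = fL '' Lset (n+1) ∪ fR '' Lset (n+1) := by
    ext w
    constructor
    · intro hw
      obtain ⟨i, rfl⟩ := mem_Lset_iff.mp hw
      rcases Nat.even_or_odd i with ⟨k, hk⟩ | ⟨k, hk⟩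
      · left
        have hik : i = 2*k := by omega
        subst hik
        exact ⟨W (n+1) k, mem_Lset_iff.mpr ⟨k, rfl⟩, WL n k⟩
      · right
        have hik : i = 2*k+1 := by omega
        subst hik
        exact ⟨W (n+1) k, mem_Lset_iff.mpr ⟨k, rfl⟩, WR n k⟩
    · rintro (⟨u, hu, rfl⟩ | ⟨u, hu, rfl⟩) <;> obtain ⟨k, rfl⟩ := mem_Lset_iff.mp hu
      · rw [WL]; exact mem_Lset_iff.mpr ⟨2*k, rfl⟩
      · rw [WR]; exact mem_Lset_iff.mpr ⟨2*k+1, rfl⟩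
  have hdisj : Disjoint (fL '' Lset (n+1)) (fR '' Lset (n+1)) := by
    rw [Set.disjoint_left]
    rintro x ⟨u, hu, rfl⟩ ⟨u', hu', hux⟩
    obtain ⟨k, rfl⟩ := mem_Lset_iff.mp hu
    obtain ⟨k', rfl⟩ := mem_Lset_iff.mp hu'
    rw [WR] at hux
    rw [WL] at hux
    have := W_parity (by omega : 4 ≤ 2*n+1) hux.symm
    omega
  rw [hset, Set.ncard_union_eq hdisj ((Lset_finite _).image _) ((Lset_finite _).image _),
    Set.ncard_image_of_injOn (fun u hu u' hu' h => fL_inj (by rw [hu.1, hu'.1]) h),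
    Set.ncard_image_of_injOn (fun u hu u' hu' h => fR_inj (by rw [hu.1, hu'.1]) h)]
  omega

lemma not_pal_odd {w : List Bool} (h : IsPalin Bool.not w) : w.length % 2 = 0 := by
  by_contra hodd
  obtain ⟨c, hc⟩ : ∃ c, w.length = 2*c+1 := ⟨w.length/2, by omega⟩
  unfold IsPalin antim at h
  have hcl : c < w.length := by omega
  have e : ((w.map Bool.not).reverse)[c]? = w[c]? := by rw [h]
  rw [List.getElem?_reverse (by simp; omega), List.length_map,
    show w.length - 1 - c = c by omega, List.getElem?_map,
    List.getElem?_eq_getElem hcl] at e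
  simp at e

lemma R5 {m : ℕ} (hm : m % 2 = 1) : fP tm Bool.not m = 0 := by
  rw [fP_eq]
  convert Set.ncard_empty (List Bool)
  ext w
  simp only [Set.mem_setOf_eq, Set.mem_empty_iff_false, iff_false]
  rintro ⟨⟨hl, -⟩, hp⟩
  have := not_pal_odd hp
  omega

lemma W_getElem? {m i j : ℕ} (h : j < m) : (W m i)[j]? = some (tmF (i + j)) := by
  unfold W
  rw [List.getElem?_map, List.getElem?_range h]
  rfl

lemma pal_tmF {m i : ℕ} (h : (W m i).reverse = W m i) (j : ℕ) (hj : j < m) :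
    tmF (i + j) = tmF (i + (m - 1 - j)) := by
  have e : ((W m i).reverse)[j]? = (W m i)[j]? := by rw [h]
  rw [List.getElem?_reverse (by rw [W_length]; omega), W_length,
    W_getElem? (by omega), W_getElem? hj] at e
  simp only [Option.some.injEq] at e
  exact e.symm

lemma R6 {n : ℕ} (hn : 2 ≤ n) : fP tm id (2*n+1) = 0 := by
  rw [fP_eq]
  convert Set.ncard_empty (List Bool)
  ext w
  simp only [Set.mem_setOf_eq, Set.mem_empty_iff_false, iff_false]
  rintro ⟨hw, hp⟩
  obtain ⟨i, rfl⟩ := mem_Lset_iff.mp hw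
  rw [IsPalin, antim_id_eq] at hp
  have H := pal_tmF hp
  rcases Nat.even_or_odd i with ⟨k, hk⟩ | ⟨k, hk⟩
  · have hik : i = 2*k := by omega
    subst hik
    have H0 := H 0 (by omega)
    have H1 := H 1 (by omega)
    have H2 := H 2 (by omega)
    have H3 := H 3 (by omega)
    rw [show 2*k+0 = 2*k by omega, show 2*k + (2*n+1-1-0) = 2*(k+n) by omega,
      tmF_even, tmF_even] at H0
    rw [show 2*k + (2*n+1-1-1) = 2*(k+n-1)+1 by omega,
      tmF_odd, tmF_odd] at H1
    rw [show 2*k+2 = 2*(k+1) by omega, show 2*k + (2*n+1-1-2) = 2*(k+n-1) by omega,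
      tmF_even, tmF_even] at H2
    rw [show 2*k+3 = 2*(k+1)+1 by omega, show 2*k + (2*n+1-1-3) = 2*(k+n-2)+1 by omega,
      tmF_odd, tmF_odd] at H3
    have hc := noConst3 (k+n-2)
    rw [show k+n-2+1 = k+n-1 by omega, show k+n-2+2 = k+n by omega] at hc
    revert H0 H1 H2 H3 hc
    cases tmF k <;> cases tmF (k+1) <;> cases tmF (k+n-2) <;> cases tmF (k+n-1) <;>
      cases tmF (k+n) <;> simp
  · have hik : i = 2*k+1 := by omega
    subst hik
    have H1 := H 1 (by omega)
    have H2 := H 2 (by omega)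
    have H3 := H 3 (by omega)
    have H4 := H 4 (by omega)
    rw [show 2*k+1+1 = 2*(k+1) by omega, show 2*k+1 + (2*n+1-1-1) = 2*(k+n) by omega,
      tmF_even, tmF_even] at H1
    rw [show 2*k+1+2 = 2*(k+1)+1 by omega, show 2*k+1 + (2*n+1-1-2) = 2*(k+n-1)+1 by omega,
      tmF_odd, tmF_odd] at H2
    rw [show 2*k+1+3 = 2*(k+2) by omega, show 2*k+1 + (2*n+1-1-3) = 2*(k+n-1) by omega,
      tmF_even, tmF_even] at H3
    rw [show 2*k+1+4 = 2*(k+2)+1 by omega, show 2*k+1 + (2*n+1-1-4) = 2*(k+n-2)+1 by omega,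
      tmF_odd, tmF_odd] at H4
    have hc := noConst3 (k+n-2)
    rw [show k+n-2+1 = k+n-1 by omega, show k+n-2+2 = k+n by omega] at hc
    revert H1 H2 H3 H4 hc
    cases tmF (k+1) <;> cases tmF (k+2) <;> cases tmF (k+n-2) <;> cases tmF (k+n-1) <;>
      cases tmF (k+n) <;> simp



lemma W1_explicit (i : ℕ) : W 1 i = [tmF i] := by
  have : List.range 1 = [0] := rfl
  simp [W, this]

lemma W2_explicit (i : ℕ) : W 2 i = [tmF i, tmF (i+1)] := by
  have : List.range 2 = [0, 1] := rfl
  simp [W, this]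

lemma W3_explicit (i : ℕ) : W 3 i = [tmF i, tmF (i+1), tmF (i+2)] := by
  have : List.range 3 = [0, 1, 2] := rfl
  simp [W, this]

def F1 : Finset (List Bool) := {[false], [true]}
def F2 : Finset (List Bool) :=
  {[false,false], [false,true], [true,false], [true,true]}
def F3 : Finset (List Bool) :=
  {[false,false,true], [false,true,false], [false,true,true],
   [true,false,false], [true,false,true], [true,true,false]}
def F4 : Finset (List Bool) :=
  {[false,false,true,false], [false,false,true,true], [false,true,false,false],
   [false,true,false,true], [false,true,true,false], [true,false,false,true],
   [true,false,true,false], [true,false,true,true], [true,true,false,false],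
   [true,true,false,true]}

lemma Lset1 : Lset 1 = ↑F1 := by
  ext w
  rw [mem_Lset_iff]
  constructor
  · rintro ⟨i, rfl⟩
    rw [W1_explicit]
    cases h : tmF i <;> simp [F1]
  · intro hw
    rw [Finset.mem_coe] at hw
    fin_cases hw
    · exact ⟨0, by decide⟩
    · exact ⟨1, by decide⟩

lemma Lset2 : Lset 2 = ↑F2 := by
  ext w
  rw [mem_Lset_iff]
  constructor
  · rintro ⟨i, rfl⟩
    rw [W2_explicit]
    cases h : tmF i <;> cases h2 : tmF (i+1) <;> simp [F2]
  · intro hw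
    rw [Finset.mem_coe] at hw
    fin_cases hw
    · exact ⟨5, by decide⟩
    · exact ⟨0, by decide⟩
    · exact ⟨2, by decide⟩
    · exact ⟨1, by decide⟩

lemma Lset3 : Lset 3 = ↑F3 := by
  ext w
  rw [mem_Lset_iff]
  constructor
  · rintro ⟨i, rfl⟩
    rw [W3_explicit]
    rcases Nat.even_or_odd i with ⟨k, hk⟩ | ⟨k, hk⟩
    · obtain rfl : i = 2*k := by omega
      rw [show 2*k+1 = 2*k+1 from rfl, tmF_odd, show 2*k+2 = 2*(k+1) by ring, tmF_even,
        tmF_even]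
      cases h : tmF k <;> cases h2 : tmF (k+1) <;> simp [F3]
    · obtain rfl : i = 2*k+1 := by omega
      rw [tmF_odd, show 2*k+1+1 = 2*(k+1) by ring, tmF_even,
        show 2*k+1+2 = 2*(k+1)+1 by ring, tmF_odd]
      cases h : tmF k <;> cases h2 : tmF (k+1) <;> simp [F3]
  · intro hw
    rw [Finset.mem_coe] at hw
    fin_cases hw
    · exact ⟨5, by decide⟩
    · exact ⟨3, by decide⟩
    · exact ⟨0, by decide⟩
    · exact ⟨4, by decide⟩
    · exact ⟨2, by decide⟩
    · exact ⟨1, by decide⟩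

lemma Lset4 : Lset 4 = ↑F4 := by
  ext w
  rw [mem_Lset_iff]
  constructor
  · rintro ⟨i, rfl⟩
    rw [W4_explicit]
    rcases Nat.even_or_odd i with ⟨k, hk⟩ | ⟨k, hk⟩
    · obtain rfl : i = 2*k := by omega
      rw [show 2*k+1 = 2*k+1 from rfl, tmF_odd, show 2*k+2 = 2*(k+1) by ring, tmF_even,
        show 2*k+3 = 2*(k+1)+1 by ring, tmF_odd, tmF_even]
      cases h : tmF k <;> cases h2 : tmF (k+1) <;> simp [F4]
    · obtain rfl : i = 2*k+1 := by omega
      rw [tmF_odd, show 2*k+1+1 = 2*(k+1) by ring, tmF_even,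
        show 2*k+1+2 = 2*(k+1)+1 by ring, tmF_odd,
        show 2*k+1+3 = 2*(k+2) by ring, tmF_even]
      have hc := noConst3 k
      rw [show k+1+1 = k+2 from rfl] at hc
      cases h : tmF k <;> cases h2 : tmF (k+1) <;> cases h3 : tmF (k+2) <;>
        rw [h, h2, h3] at hc <;> simp [F4] <;> simp at hc
  · intro hw
    rw [Finset.mem_coe] at hw
    fin_cases hw
    · exact ⟨9, by decide⟩
    · exact ⟨5, by decide⟩
    · exact ⟨3, by decide⟩
    · exact ⟨10, by decide⟩
    · exact ⟨0, by decide⟩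
    · exact ⟨4, by decide⟩
    · exact ⟨2, by decide⟩
    · exact ⟨11, by decide⟩
    · exact ⟨7, by decide⟩
    · exact ⟨1, by decide⟩

lemma fC_val {m : ℕ} {F : Finset (List Bool)} (hL : Lset m = ↑F) : fC tm m = F.card := by
  rw [fC_eq, hL, Set.ncard_coe_finset]

lemma fP_val {m : ℕ} {F PF : Finset (List Bool)} (θ : Bool → Bool) (hL : Lset m = ↑F)
    (h1 : ∀ w ∈ F, (antim θ w = w ↔ w ∈ PF)) (h2 : PF ⊆ F) :
    fP tm θ m = PF.card := by
  rw [fP_eq, ← Set.ncard_coe_finset]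
  congr 1
  ext w
  constructor
  · rintro ⟨hw, hp⟩
    rw [hL] at hw
    exact (h1 w hw).mp hp
  · intro hw
    have hwF : w ∈ F := h2 hw
    exact ⟨by rw [hL]; exact hwF, (h1 w hwF).mpr hw⟩


lemma fC1 : fC tm 1 = 2 := by rw [fC_val Lset1]; rfl
lemma fC2 : fC tm 2 = 4 := by rw [fC_val Lset2]; rfl
lemma fC3 : fC tm 3 = 6 := by rw [fC_val Lset3]; rfl
lemma fC4 : fC tm 4 = 10 := by rw [fC_val Lset4]; rfl

lemma fPid1 : fP tm id 1 = 2 := by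
  rw [fP_val id Lset1 (PF := F1) (by decide) (by decide)]; rfl
lemma fPid2 : fP tm id 2 = 2 := by
  rw [fP_val id Lset2 (PF := {[false,false],[true,true]}) (by decide) (by decide)]; rfl
lemma fPid3 : fP tm id 3 = 2 := by
  rw [fP_val id Lset3 (PF := {[false,true,false],[true,false,true]}) (by decide) (by decide)]
  rfl
lemma fPid4 : fP tm id 4 = 2 := by
  rw [fP_val id Lset4 (PF := {[false,true,true,false],[true,false,false,true]})
    (by decide) (by decide)]
  rfl
lemma fPnot2 : fP tm Bool.not 2 = 2 := by
  rw [fP_val Bool.not Lset2 (PF := {[false,true],[true,false]}) (by decide) (by decide)]; rfl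
lemma fPnot4 : fP tm Bool.not 4 = 4 := by
  rw [fP_val Bool.not Lset4
    (PF := {[false,true,false,true],[true,false,true,false],
            [false,false,true,true],[true,true,false,false]}) (by decide) (by decide)]
  rfl


/-- For the Thue-Morse word, with `R = antim id` the reversal
antimorphism and `E = antim Bool.not` the exchange antimorphism,
`ΔC(n) + 4 = P_R(n) + P_R(n+1) + P_E(n) + P_E(n+1)` for all `n ≥ 1`. -/
theorem thueMorse_saturation_equality (n : ℕ) (hn : 1 ≤ n) :
    (fC tm (n + 1) : ℤ) - fC tm n + 4 =
      (fP tm id n : ℤ) + fP tm id (n + 1) + fP tm Bool.not n + fP tm Bool.not (n + 1) := by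
  induction n using Nat.strong_induction_on with
  | _ n ih =>
    by_cases h4 : n < 4
    · interval_cases n
      · rw [fC2, fC1, fPid1, fPid2, R5 (by omega : 1 % 2 = 1), fPnot2]
        norm_num
      · rw [fC3, fC2, fPid2, fPid3, fPnot2, R5 (by omega : 3 % 2 = 1)]
        norm_num
      · rw [fC4, fC3, fPid3, fPid4, R5 (by omega : 3 % 2 = 1), fPnot4]
        norm_num
    · rcases Nat.even_or_odd n with ⟨m, hm⟩ | ⟨m, hm⟩
      · obtain rfl : n = 2*m := by omega
        have hm2 : 2 ≤ m := by omega
        rw [show 2*m+1 = 2*m+1 from rfl, R2 hm2, R1 hm2, R3 hm2, R4 hm2,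
          R5 (by omega : (2*m+1) % 2 = 1), R6 hm2]
        have IH := ih m (by omega) (by omega)
        push_cast at IH ⊢
        linarith
      · obtain rfl : n = 2*m+1 := by omega
        have hm2 : 2 ≤ m := by omega
        have hm2' : 2 ≤ m+1 := by omega
        rw [show 2*m+1+1 = 2*(m+1) by ring, R1 hm2', R2 hm2, R3 hm2', R4 hm2',
          R5 (by omega : (2*m+1) % 2 = 1), R6 hm2]
        have IH := ih (m+1) (by omega) (by omega)
        push_cast at IH ⊢
        linarith
end

section
/- For every involutive antimorphism Θ of {0,1}*, the Thue-Morse word u_TM has infinite Θ-defect, i.e., the Thue-Morse word is not almost Θ-rich for any antimorphism Θ. -/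
open scoped Classical

/-!
An involutive `θ` on `{0,1}` is the identity or the exchange of letters, so `Θ`-palindromes are
palindromes or antipalindromes. Appending a letter creates at most one new `Θ`-palindromic factor
(a shorter palindromic suffix of a palindrome is also its prefix, hence occurs earlier), so the
defect of a prefix is at least the number of prefixes without a new `Θ`-palindromic suffix,
minus `γ ≤ 2`.

In the Thue-Morse word the prefix of length `3·2^k + 1`, `k ≥ 2`, has no new antipalindromic
suffix for even `k` and no new palindromic suffix for odd `k`. Suffixes of even length start at an
odd position and desubstitute along `φ` to suffixes of the other kind of the prefix of length
`3·2^(k-1) + 1`; odd lengths are ruled out by the absence of `000`, `111` and of palindromes of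
length `5`, except for the single letter `tm (3·2^k) = 0`; the case `k = 2` is a finite check.
Hence the defect of the prefixes of the Thue-Morse word is unbounded.
-/

section Window

variable {α : Type*} (u : ℕ → α)

def window (a ℓ : ℕ) : List α := (List.range ℓ).map fun k => u (a + k)

@[simp] theorem length_window (a ℓ : ℕ) : (window u a ℓ).length = ℓ := by simp [window]

@[simp] theorem getElem_window (a ℓ i : ℕ) (h : i < (window u a ℓ).length) :
    (window u a ℓ)[i] = u (a + i) := by
  simp [window]

theorem window_add (a m k : ℕ) : window u a (m + k) = window u a m ++ window u (a + m) k := by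
  simp [window, List.range_add, add_assoc]

theorem window_succ (a ℓ : ℕ) : window u a (ℓ + 1) = window u a ℓ ++ [u (a + ℓ)] := by
  rw [window_add]
  simp [window]

theorem isFactor_window (a ℓ : ℕ) : IsFactor u (window u a ℓ) :=
  ⟨a, by simp [OccursAt, window]⟩

theorem window_congr {a b ℓ : ℕ} (h : ∀ i < ℓ, u (b + i) = u (a + i)) :
    window u b ℓ = window u a ℓ :=
  List.ext_getElem (by simp) fun i hi _ => by simpa using h i (by simpa using hi)

theorem window_isInfix {b ℓ n : ℕ} (h : b + ℓ ≤ n) : window u b ℓ <:+: window u 0 n := by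
  obtain ⟨m, rfl⟩ := Nat.exists_eq_add_of_le h
  rw [window_add, window_add, zero_add]
  exact List.infix_append _ _ _

theorem eq_window_of_isSuffix {p : List α} {n : ℕ} (h : p <:+ window u 0 n) :
    p = window u (n - p.length) p.length := by
  have hsplit := window_add u 0 (n - p.length) p.length
  rw [Nat.sub_add_cancel (by simpa using h.length_le), zero_add] at hsplit
  have hsuf : window u (n - p.length) p.length <:+ window u 0 n :=
    hsplit ▸ List.suffix_append _ _
  exact (List.suffix_of_suffix_length_le h hsuf (by simp)).eq_of_length (by simp)

end Window

section Palindromes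

variable {α : Type*} {θ : α → α}

theorem antim_append (v w : List α) : antim θ (v ++ w) = antim θ w ++ antim θ v := by
  simp [antim]

theorem IsPalin.isPrefix_of_isSuffix {p q : List α} (hp : IsPalin θ p) (hq : IsPalin θ q)
    (h : q <:+ p) : q <+: p := by
  obtain ⟨t, rfl⟩ := h
  refine ⟨antim θ t, ?_⟩
  calc q ++ antim θ t = antim θ (t ++ q) := by rw [antim_append, show antim θ q = q from hq]
    _ = t ++ q := hp

theorem finite_palFactors (θ : α → α) (w : List α) : (palFactors θ w).Finite :=
  w.sublists.toFinset.finite_toSet.subset fun _ hp => by simpa using hp.1.sublist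

def newPalSuffixes (θ : α → α) (w : List α) (x : α) : Set (List α) :=
  {p | p <:+ w ++ [x] ∧ IsPalin θ p ∧ ¬ p <:+: w}

theorem palFactors_concat_subset (w : List α) (x : α) :
    palFactors θ (w ++ [x]) ⊆ palFactors θ w ∪ newPalSuffixes θ w x := by
  rintro p ⟨hinf, hpal⟩
  by_cases hw : p <:+: w
  · exact Or.inl ⟨hw, hpal⟩
  · exact Or.inr ⟨(List.infix_concat_iff.1 hinf).resolve_right hw, hpal, hw⟩

theorem subsingleton_newPalSuffixes (w : List α) (x : α) :
    (newPalSuffixes θ w x).Subsingleton := by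
  rintro p ⟨hp, hpal, hpnew⟩ q ⟨hq, hqal, hqnew⟩
  wlog hlen : q.length ≤ p.length generalizing p q
  · exact (this hq hqal hqnew hp hpal hpnew (by omega)).symm
  -- the shorter palindromic suffix is also a prefix, hence it already occurs in `w`
  have hpre : q <+: p := hpal.isPrefix_of_isSuffix hqal (List.suffix_of_suffix_length_le hq hp hlen)
  refine (hpre.eq_of_length (le_antisymm hlen (not_lt.1 fun hlt => hqnew ?_))).symm
  obtain ⟨t, rfl, ht⟩ := (List.suffix_concat_iff.1 hp).resolve_left
    (by rintro rfl; exact hpnew List.nil_infix)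
  have hqt : q <+: t :=
    List.prefix_of_prefix_length_le hpre (List.prefix_append t [x]) (by simp at hlt; omega)
  exact hqt.isInfix.trans ht.isInfix

theorem ncard_palFactors_concat_le (w : List α) (x : α) :
    (palFactors θ (w ++ [x])).ncard ≤ (palFactors θ w).ncard + 1 := by
  have hnew := subsingleton_newPalSuffixes (θ := θ) w x
  calc (palFactors θ (w ++ [x])).ncard
      ≤ (palFactors θ w ∪ newPalSuffixes θ w x).ncard :=
        Set.ncard_le_ncard (palFactors_concat_subset w x)
          ((finite_palFactors θ w).union hnew.finite)
    _ ≤ (palFactors θ w).ncard + (newPalSuffixes θ w x).ncard := Set.ncard_union_le _ _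
    _ ≤ (palFactors θ w).ncard + 1 := by
        gcongr
        exact (Set.ncard_le_one hnew.finite).2 hnew

theorem palFactors_concat_eq {w : List α} {x : α}
    (h : ∀ p, p <:+ w ++ [x] → IsPalin θ p → p <:+: w) :
    palFactors θ (w ++ [x]) = palFactors θ w := by
  refine Set.Subset.antisymm (fun p hp => ?_)
    fun p hp => ⟨hp.1.trans (List.prefix_append w [x]).isInfix, hp.2⟩
  rcases palFactors_concat_subset w x hp with hold | ⟨hs, hpal, hnew⟩
  · exact hold
  · exact absurd (h p hs hpal) hnew

theorem gammaTheta_le_card [Finite α] (θ : α → α) (w : List α) :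
    gammaTheta θ w ≤ Nat.card α := by
  have hsub : {s : Set α | ∃ a ∈ w, θ a ≠ a ∧ s = {a, θ a}} ⊆
      (fun a => ({a, θ a} : Set α)) '' Set.univ := by
    rintro s ⟨a, -, -, rfl⟩
    exact ⟨a, trivial, rfl⟩
  calc gammaTheta θ w ≤ ((fun a => ({a, θ a} : Set α)) '' Set.univ).ncard :=
        Set.ncard_le_ncard hsub (Set.toFinite _)
    _ ≤ (Set.univ : Set α).ncard := Set.ncard_image_le
    _ = Nat.card α := Set.ncard_univ α

end Palindromes

section InfiniteWords

variable {α : Type*} (θ : α → α) (u : ℕ → α)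

def IsPalWindow (a ℓ : ℕ) : Prop :=
  ∀ i j, i + j + 1 = ℓ → u (a + i) = θ (u (a + j))

variable {θ u} in
theorem IsPalin.isPalWindow {a ℓ : ℕ} (h : IsPalin θ (window u a ℓ)) : IsPalWindow θ u a ℓ := by
  intro i j hij
  have := List.getElem_of_eq h (i := i) (by simp [antim]; omega)
  simp only [antim, List.getElem_reverse, List.getElem_map, getElem_window, List.length_map,
    length_window] at this
  rw [← this, show ℓ - 1 - i = j by omega]

/-- The prefix of length `e` of `u` has no unioccurrent nonempty `θ`-palindromic suffix. -/
def PalSuffixesOccurEarlier (e : ℕ) : Prop :=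
  ∀ a ℓ, 0 < ℓ → a + ℓ = e → IsPalWindow θ u a ℓ → ∃ b < a, ∀ i < ℓ, u (b + i) = u (a + i)

variable {θ u} in
theorem PalSuffixesOccurEarlier.palFactors_window_succ {e : ℕ}
    (h : PalSuffixesOccurEarlier θ u (e + 1)) :
    palFactors θ (window u 0 (e + 1)) = palFactors θ (window u 0 e) := by
  have hsucc := window_succ u 0 e
  rw [zero_add] at hsucc
  rw [hsucc]
  refine palFactors_concat_eq fun p hp hpal => ?_
  rw [← hsucc] at hp
  have hpw := eq_window_of_isSuffix u hp
  have hle : p.length ≤ e + 1 := by simpa using hp.length_le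
  rcases Nat.eq_zero_or_pos p.length with hlen | hlen
  · exact List.length_eq_zero_iff.1 hlen ▸ List.nil_infix
  obtain ⟨b, hb, hocc⟩ := h _ _ hlen (by omega) (hpw ▸ hpal).isPalWindow
  rw [hpw, ← window_congr u hocc]
  exact window_isInfix u (by omega)

theorem ncard_palFactors_window_add_card_le (n : ℕ) :
    (palFactors θ (window u 0 n)).ncard +
      ((Finset.range n).filter fun e => PalSuffixesOccurEarlier θ u (e + 1)).card ≤ n + 1 := by
  induction n with
  | zero =>
    have : palFactors θ (window u 0 0) ⊆ {[]} := fun p hp => by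
      simpa [window] using hp.1
    simpa using Set.ncard_le_ncard this
  | succ n ih =>
    rw [Finset.range_add_one, Finset.filter_insert]
    split_ifs with h
    · rw [Finset.card_insert_of_notMem (by simp), h.palFactors_window_succ]
      omega
    · have := ncard_palFactors_concat_le (θ := θ) (window u 0 n) (u n)
      rw [window_succ, zero_add]
      omega

theorem defect_window_ge [Finite α] (n : ℕ) :
    (((Finset.range n).filter fun e => PalSuffixesOccurEarlier θ u (e + 1)).card : ℤ) -
      Nat.card α ≤ defect θ (window u 0 n) := by
  have hcount := ncard_palFactors_window_add_card_le θ u n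
  have hγ := gammaTheta_le_card θ (window u 0 n)
  rw [defect, length_window]
  omega

end InfiniteWords

section ThueMorse

theorem tm_two_mul (n : ℕ) : tm (2 * n) = tm n := by
  rcases Nat.eq_zero_or_pos n with rfl | hn
  · rfl
  · simp [tm, Nat.digits_def' one_lt_two (by omega : 0 < 2 * n)]

theorem tm_two_mul_add_one (n : ℕ) : tm (2 * n + 1) = !tm n := by
  simp only [tm, Nat.digits_def' one_lt_two (Nat.succ_pos _), List.sum_cons]
  rw [show (2 * n + 1) % 2 = 1 by omega, show (2 * n + 1) / 2 = n by omega]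
  rcases Nat.mod_two_eq_zero_or_one (Nat.digits 2 n).sum with h | h <;> simp [Nat.add_mod, h]

theorem tm_three_mul_two_pow (k : ℕ) : tm (3 * 2 ^ k) = false := by
  induction k with
  | zero => decide
  | succ k ih => rw [pow_succ, mul_comm _ 2, ← mul_assoc, mul_comm 3, mul_assoc, tm_two_mul, ih]

theorem tm_three_mul_two_pow_sub_one (k : ℕ) : tm (3 * 2 ^ k - 1) = decide (Even k) := by
  induction k with
  | zero => decide
  | succ k ih =>
    have hpos := Nat.one_le_two_pow (n := k)
    rw [show 3 * 2 ^ (k + 1) - 1 = 2 * (3 * 2 ^ k - 1) + 1 by rw [pow_succ]; omega,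
      tm_two_mul_add_one, ih]
    simp [Nat.even_add_one, -Nat.not_even_iff_odd]

theorem tm_no_triple (x : ℕ) : ¬ (tm x = tm (x + 1) ∧ tm (x + 1) = tm (x + 2)) := by
  rintro ⟨h₁, h₂⟩
  rcases Nat.even_or_odd' x with ⟨y, rfl | rfl⟩
  · rw [tm_two_mul, tm_two_mul_add_one] at h₁
    simp at h₁
  · rw [show 2 * y + 1 + 1 = 2 * (y + 1) by ring, show 2 * y + 1 + 2 = 2 * (y + 1) + 1 by ring,
      tm_two_mul, tm_two_mul_add_one] at h₂
    simp at h₂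

theorem tm_no_palindrome_five (x : ℕ) : ¬ (tm x = tm (x + 4) ∧ tm (x + 1) = tm (x + 3)) := by
  rintro ⟨h₁, h₂⟩
  rcases Nat.even_or_odd' x with ⟨y, rfl | rfl⟩
  · rw [show 2 * y + 4 = 2 * (y + 2) by ring, tm_two_mul, tm_two_mul] at h₁
    rw [show 2 * y + 3 = 2 * (y + 1) + 1 by ring, tm_two_mul_add_one, tm_two_mul_add_one] at h₂
    simp only [Bool.not_inj_iff] at h₂
    exact tm_no_triple y ⟨h₂, h₂.symm.trans h₁⟩
  · rw [show 2 * y + 1 + 4 = 2 * (y + 2) + 1 by ring, tm_two_mul_add_one,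
      tm_two_mul_add_one] at h₁
    rw [show 2 * y + 1 + 1 = 2 * (y + 1) by ring, show 2 * y + 1 + 3 = 2 * (y + 2) by ring,
      tm_two_mul, tm_two_mul] at h₂
    simp only [Bool.not_inj_iff] at h₁
    exact tm_no_triple y ⟨h₁.trans h₂.symm, h₂⟩

theorem not_isPalWindow_odd {θ : Bool → Bool} (hθ : ∀ x, θ x ≠ x) (u : ℕ → Bool) (a m : ℕ) :
    ¬ IsPalWindow θ u a (2 * m + 1) :=
  fun h => hθ _ (h m m (by ring)).symm

theorem tm_not_isPalWindow_odd {a m : ℕ} (hm : 2 ≤ m) : ¬ IsPalWindow id tm a (2 * m + 1) := by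
  intro h
  obtain ⟨m, rfl⟩ := Nat.exists_eq_add_of_le hm
  refine tm_no_palindrome_five (a + m) ⟨?_, ?_⟩
  · simpa [add_assoc] using h m (m + 4) (by ring)
  · simpa [add_assoc] using h (m + 1) (m + 3) (by ring)

/-- Desubstitution: with `xᵢ = tm (a + i)`, the window reads `(!x₀) x₁ (!x₁) x₂ ⋯ (!xₛ₋₁) xₛ`. -/
theorem IsPalWindow.tm_half {c : Bool} {a s : ℕ} (hs : 1 ≤ s)
    (h : IsPalWindow (xor c) tm (2 * a + 1) (2 * s)) : IsPalWindow (xor !c) tm a (s + 1) := by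
  intro i j hij
  wlog hj : 1 ≤ j generalizing i j
  · have := this j i (by omega) (by omega)
    rw [this]
    simp
  have := h (2 * i) (2 * j - 1) (by omega)
  rw [show 2 * a + 1 + 2 * i = 2 * (a + i) + 1 by ring,
    show 2 * a + 1 + (2 * j - 1) = 2 * (a + j) by omega, tm_two_mul_add_one, tm_two_mul] at this
  rw [← Bool.not_not (tm (a + i)), this]
  simp

theorem tm_occurrence_double {a b s : ℕ} (h : ∀ i < s + 1, tm (b + i) = tm (a + i)) :
    ∀ i < 2 * s, tm (2 * b + 1 + i) = tm (2 * a + 1 + i) := by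
  intro i hi
  rcases Nat.even_or_odd' i with ⟨r, rfl | rfl⟩
  · rw [show 2 * b + 1 + 2 * r = 2 * (b + r) + 1 by ring,
      show 2 * a + 1 + 2 * r = 2 * (a + r) + 1 by ring, tm_two_mul_add_one, tm_two_mul_add_one,
      h r (by omega)]
  · rw [show 2 * b + 1 + (2 * r + 1) = 2 * (b + (r + 1)) by ring,
      show 2 * a + 1 + (2 * r + 1) = 2 * (a + (r + 1)) by ring, tm_two_mul, tm_two_mul,
      h (r + 1) (by omega)]

theorem eq_zero_of_tm_isPalWindow_odd_suffix {k a m : ℕ} (hend : a + (2 * m + 1) = 3 * 2 ^ k + 1)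
    (h : IsPalWindow (xor (decide (Even k))) tm a (2 * m + 1)) : m = 0 := by
  by_cases hk : Even k
  · simp only [hk, decide_true] at h
    exact absurd h (not_isPalWindow_odd (by simp) tm a m)
  have hpal : IsPalWindow id tm a (2 * m + 1) := fun i j hij => by
    simpa [hk] using h i j hij
  by_contra hm0
  rcases lt_or_ge m 2 with hm | hm
  · obtain rfl : m = 1 := by omega
    have h₁ : tm (a + 1) = false := by
      rw [show a + 1 = 3 * 2 ^ k - 1 by omega, tm_three_mul_two_pow_sub_one, decide_eq_false hk]
    have h₂ : tm (a + 2) = false := by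
      rw [show a + 2 = 3 * 2 ^ k by omega, tm_three_mul_two_pow]
    have h₀ : tm a = false := by simpa [h₂] using hpal 0 2 rfl
    exact tm_no_triple a ⟨h₀.trans h₁.symm, h₁.trans h₂.symm⟩
  · exact tm_not_isPalWindow_odd hm hpal

theorem tm_palSuffixesOccurEarlier_two :
    PalSuffixesOccurEarlier (xor (decide (Even 2))) tm (3 * 2 ^ 2 + 1) := by
  have hcheck : ∀ ℓ < 14, 0 < ℓ →
      (∀ i < ℓ, ∀ j < ℓ, i + j + 1 = ℓ → tm (13 - ℓ + i) = xor true (tm (13 - ℓ + j))) →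
      ∃ b < 13 - ℓ, ∀ i < ℓ, tm (b + i) = tm (13 - ℓ + i) := by
    decide
  intro a ℓ hℓ hend hpal
  obtain rfl : a = 13 - ℓ := by omega
  exact hcheck ℓ (by omega) hℓ fun i _ j _ hij => hpal i j hij

theorem tm_palSuffixesOccurEarlier_succ {k : ℕ}
    (h : PalSuffixesOccurEarlier (xor (decide (Even k))) tm (3 * 2 ^ k + 1)) :
    PalSuffixesOccurEarlier (xor (decide (Even (k + 1)))) tm (3 * 2 ^ (k + 1) + 1) := by
  intro a ℓ hℓ hend hpal
  rw [pow_succ] at hend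
  rcases Nat.even_or_odd' ℓ with ⟨s, rfl | rfl⟩
  · obtain ⟨a, rfl⟩ : ∃ a', a = 2 * a' + 1 := ⟨a / 2, by omega⟩
    have hhalf := hpal.tm_half (by omega)
    simp only [Nat.even_add_one, decide_not, Bool.not_not] at hhalf
    obtain ⟨b, hb, hocc⟩ := h a (s + 1) (by omega) (by omega) hhalf
    exact ⟨2 * b + 1, by omega, tm_occurrence_double hocc⟩
  · obtain rfl := eq_zero_of_tm_isPalWindow_odd_suffix (by rw [pow_succ]; exact hend) hpal
    refine ⟨0, by have := Nat.two_pow_pos k; omega, fun i hi => ?_⟩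
    obtain rfl : i = 0 := by omega
    rw [add_zero, add_zero, show a = 3 * 2 ^ (k + 1) by rw [pow_succ]; omega,
      tm_three_mul_two_pow]
    decide

theorem tm_palSuffixesOccurEarlier {k : ℕ} (hk : 2 ≤ k) :
    PalSuffixesOccurEarlier (xor (decide (Even k))) tm (3 * 2 ^ k + 1) := by
  induction k, hk using Nat.le_induction with
  | base => exact tm_palSuffixesOccurEarlier_two
  | succ k _ ih => exact tm_palSuffixesOccurEarlier_succ ih

theorem tm_exists_le_card_palSuffixesOccurEarlier (c : Bool) (R : ℕ) : ∃ n,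
    R ≤ ((Finset.range n).filter fun e => PalSuffixesOccurEarlier (xor c) tm (e + 1)).card := by
  -- `k` enumerates the exponents `k ≥ 2` with `decide (Even k) = c`
  set k : ℕ → ℕ := fun j => 2 * j + 2 + (!c).toNat
  have hk : StrictMono k := fun i j hij => by simp only [k]; omega
  have hinj : Function.Injective fun j => 3 * 2 ^ k j := fun i j hij =>
    hk.injective (Nat.pow_right_injective le_rfl (by simpa using hij))
  refine ⟨3 * 2 ^ (2 * R + 2), ?_⟩
  calc R = ((Finset.range R).image fun j => 3 * 2 ^ k j).card := by
        rw [Finset.card_image_of_injective _ hinj, Finset.card_range]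
    _ ≤ _ := Finset.card_le_card fun e he => by
      obtain ⟨j, hj, rfl⟩ := Finset.mem_image.1 he
      have hcolor : decide (Even (k j)) = c := by cases c <;> simp [k, Nat.even_add_one]
      refine Finset.mem_filter.2 ⟨Finset.mem_range.2 ?_, ?_⟩
      · have hkj : k j < 2 * R + 2 := by
          have := Bool.toNat_le (!c)
          have := Finset.mem_range.1 hj
          simp only [k]
          omega
        have := Nat.pow_lt_pow_right one_lt_two hkj
        omega
      · simpa [hcolor] using tm_palSuffixesOccurEarlier (k := k j) (by simp only [k]; omega)

end ThueMorse

theorem Bool.exists_eq_xor_of_involutive {θ : Bool → Bool} (hθ : Function.Involutive θ) :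
    ∃ c, θ = xor c := by
  refine ⟨θ false, funext fun b => ?_⟩
  have h₀ := hθ false
  have h₁ := hθ true
  cases b <;> cases hf : θ false <;> cases ht : θ true <;> simp_all

/-- For every involutive antimorphism `Θ` of `{0,1}*` (induced by an
involutive letter map `θ`), the Thue-Morse word has infinite `Θ`-defect, i.e. it is
not almost `Θ`-rich. -/
theorem thueMorse_not_almost_rich (θ : Bool → Bool) (hθ : Function.Involutive θ) :
    ¬ ∃ B : ℤ, ∀ w : List Bool, IsFactor tm w → defect θ w ≤ B := by
  rintro ⟨B, hB⟩
  obtain ⟨c, rfl⟩ := Bool.exists_eq_xor_of_involutive hθ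
  obtain ⟨n, hn⟩ := tm_exists_le_card_palSuffixesOccurEarlier c (B.toNat + 3)
  have hdefect := defect_window_ge (xor c) tm n
  have hbound := hB _ (isFactor_window tm 0 n)
  simp only [Nat.card_eq_fintype_card, Fintype.card_bool] at hdefect
  omega
end

section
/- Let w ∈ A* be the shortest period of the periodic infinite word u = w^ω over a finite alphabet A (where every letter of A occurs in w), and suppose the language of u is closed under a non-erasing antimorphism Θ : A* → A* of finite order. Then Θ is an involution, i.e., Θ² = Id. -/
open scoped Classical

/-- If `w` is the shortest period of the periodic word `u = w^ω`
(containing every letter of the finite alphabet `A`), and the language of `u` is closed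
under a non-erasing antimorphism `Θ` of finite order, then `Θ` is an involution. -/
theorem periodic_closed_antimorphism_is_involution
    {A : Type*} [Fintype A] (w : List A) (hw : w ≠ [])
    (u : ℕ → A)
    (hall : ∀ a : A, a ∈ w)
    (hpre : OccursAt u w 0)
    (hper : ∀ n : ℕ, u (n + w.length) = u n)
    (hmin : ∀ v : List A, v ≠ [] → OccursAt u v 0 →
      (∀ n : ℕ, u (n + v.length) = u n) → w.length ≤ v.length)
    (Θ : List A → List A)
    (hanti : ∀ v₁ v₂ : List A, Θ (v₁ ++ v₂) = Θ v₂ ++ Θ v₁)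
    (hnonerasing : ∀ a : A, Θ [a] ≠ [])
    (hfin : ∃ k : ℕ, 1 ≤ k ∧ Θ^[k] = id)
    (hclosed : ∀ v : List A, IsFactor u v → IsFactor u (Θ v)) :
    ∀ v : List A, Θ (Θ v) = v := by
  -- Θ of the empty word is empty
  have hnil : Θ [] = [] := by
    have h := hanti [] []
    simp only [List.append_nil] at h
    have hl : (Θ ([] : List A)).length = (Θ ([] : List A)).length + (Θ ([] : List A)).length := by
      conv_lhs => rw [h]
      simp
    have h0 : (Θ ([] : List A)).length = 0 := by omega
    exact List.eq_nil_of_length_eq_zero h0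
  have hcons : ∀ (a : A) (t : List A), Θ (a :: t) = Θ t ++ Θ [a] := by
    intro a t
    simpa using hanti [a] t
  -- Θ does not decrease length
  have hlen : ∀ v : List A, v.length ≤ (Θ v).length := by
    intro v
    induction v with
    | nil => simp [hnil]
    | cons a t ih =>
      rw [hcons, List.length_append]
      have ha : 0 < (Θ [a]).length := List.length_pos_iff.mpr (hnonerasing a)
      simp only [List.length_cons]
      omega
  have hlenit : ∀ (j : ℕ) (v : List A), v.length ≤ (Θ^[j] v).length := by
    intro j
    induction j with
    | zero => simp
    | succ j ih =>
      intro v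
      rw [Function.iterate_succ_apply]
      exact le_trans (hlen v) (ih (Θ v))
  obtain ⟨k, hk1, hkid⟩ := hfin
  -- Θ is letter-to-letter
  have hθ1 : ∀ a : A, ∃ b, Θ [a] = [b] := by
    intro a
    have h1 : (Θ^[k] [a]) = [a] := by rw [hkid]; rfl
    obtain ⟨k', rfl⟩ : ∃ k', k = k' + 1 := ⟨k - 1, by omega⟩
    rw [Function.iterate_succ_apply] at h1
    have h2 := hlenit k' (Θ [a])
    rw [h1] at h2
    have h3 : 0 < (Θ [a]).length := List.length_pos_iff.mpr (hnonerasing a)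
    have h4 : (Θ [a]).length = 1 := by
      simp only [List.length_cons, List.length_nil] at h2
      omega
    exact List.length_eq_one_iff.mp h4
  choose θ hθ using hθ1
  have hform : ∀ v : List A, Θ v = (v.map θ).reverse := by
    intro v
    induction v with
    | nil => simp [hnil]
    | cons a t ih =>
      rw [hcons, ih, hθ]
      simp
  -- the periodic structure of u
  have hn : 0 < w.length := List.length_pos_iff.mpr hw
  have hpre' : w = (List.range w.length).map fun k => u (0 + k) := hpre
  have hwval : ∀ (j : ℕ) (h : j < w.length), w[j]'h = u j := by
    intro j h
    rw [List.getElem_of_eq hpre' h]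
    simp
  have hmod : ∀ j, u j = u (j % w.length) := by
    intro j
    induction j using Nat.strong_induction_on with
    | _ j ih =>
      by_cases h : j < w.length
      · rw [Nat.mod_eq_of_lt h]
      · have hlt : j - w.length < j := by omega
        have e : j = (j - w.length) + w.length := by omega
        rw [e, hper (j - w.length), ih _ hlt, Nat.add_mod_right]
  -- Θ w is a factor of u
  obtain ⟨i, hocc⟩ := hclosed w ⟨0, hpre⟩
  have hocc' : Θ w = (List.range (Θ w).length).map fun k => u (i + k) := hocc
  have hΘwlen : (Θ w).length = w.length := by rw [hform]; simp
  rw [hΘwlen] at hocc'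
  rw [hform] at hocc'
  -- key : θ (u m) = u (i + (w.length - 1 - m)) for m < w.length
  have hstep : ∀ m, m < w.length → θ (u m) = u (i + (w.length - 1 - m)) := by
    intro m hm
    have hj : w.length - 1 - m < w.length := by omega
    have h1 : ((w.map θ).reverse)[w.length - 1 - m]'(by simp; omega) =
        ((List.range w.length).map fun k => u (i + k))[w.length - 1 - m]'(by simp; omega) := by
      simp only [hocc']
    rw [List.getElem_reverse, List.getElem_map, List.getElem_map, List.getElem_range] at h1
    have e : (List.map θ w).length - 1 - (w.length - 1 - m) = m := by simp; omega
    simp only [e] at h1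
    rw [hwval m hm] at h1
    exact h1
  have hstep' : ∀ x, θ (u x) = u (i + (w.length - 1 - x % w.length)) := by
    intro x
    rw [hmod x]
    exact hstep _ (Nat.mod_lt _ hn)
  -- θ is an involution on the letters of u
  have hinvu : ∀ m, m < w.length → θ (θ (u m)) = u m := by
    intro m hm
    rw [hstep m hm, hstep' (i + (w.length - 1 - m))]
    rw [hmod (i + (w.length - 1 - (i + (w.length - 1 - m)) % w.length))]
    congr 1
    -- arithmetic: reflect twice is identity mod w.length
    set n := w.length with hndef
    set c := i + (n - 1) with hcdef
    have hc1 : i + (n - 1 - m) = c - m := by omega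
    rw [hc1]
    have hr : (c - m) % n < n := Nat.mod_lt _ hn
    have hdiv := Nat.div_add_mod (c - m) n
    have e1 : i + (n - 1 - (c - m) % n) = m + n * ((c - m) / n) := by omega
    rw [e1, Nat.add_mul_mod_self_left, Nat.mod_eq_of_lt hm]
  have hinva : ∀ a : A, θ (θ a) = a := by
    intro a
    obtain ⟨m, hm, hma⟩ := List.mem_iff_getElem.mp (hall a)
    rw [← hma, hwval m hm]
    exact hinvu m hm
  -- conclude
  intro v
  rw [hform, hform, List.map_reverse, List.reverse_reverse, List.map_map]
  have : ∀ l : List A, l.map (θ ∘ θ) = l := by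
    intro l
    induction l with
    | nil => simp
    | cons a t ih => simp [ih, hinva a]
  exact this v
end

section
/- Let w ∈ A* be the shortest period of the periodic infinite word u = w^ω over a finite alphabet A (where every letter of A occurs in w), and suppose the language of u is closed under a non-erasing antimorphism Θ : A* → A* of finite order. Then w can be written as w = ps where both p and s are Θ-palindromes (one of them possibly empty). -/
open scoped Classical

/-!
Being non-erasing, `Θ` never shortens a word, so having finite order it preserves lengths.
Hence `Θ w` is a factor of `u = w^ω` of length `|w|`, i.e. a rotation of `w`: writing
`w = p s`, we get `Θ s · Θ p = Θ (p s) = s p`, and comparing lengths, `Θ s = s` and `Θ p = p`.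
-/

theorem apply_eq_of_le_apply_of_iterate_eq_id {α β : Type*} [PartialOrder β]
    {f : α → α} {g : α → β} (hle : ∀ x, g x ≤ g (f x)) {k : ℕ} (hk : 1 ≤ k)
    (hfk : f^[k] = id) (x : α) : g (f x) = g x := by
  obtain ⟨m, rfl⟩ := Nat.exists_eq_add_of_le' hk
  have hmono : ∀ n y, g y ≤ g (f^[n] y) := by
    intro n
    induction n with
    | zero => exact fun y => le_rfl
    | succ n ih => exact fun y => (hle y).trans (ih (f y))
  have hx : f^[m] (f x) = x := by rw [← Function.iterate_succ_apply, hfk, id]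
  exact le_antisymm ((hmono m (f x)).trans_eq (congrArg g hx)) (hle x)

section Antimorphism

variable {A : Type*} {Θ : List A → List A}

theorem length_le_length_antimorphism (hanti : ∀ v₁ v₂ : List A, Θ (v₁ ++ v₂) = Θ v₂ ++ Θ v₁)
    (hnonerasing : ∀ a : A, Θ [a] ≠ []) (v : List A) : v.length ≤ (Θ v).length := by
  induction v with
  | nil => simp
  | cons a t ih =>
    rw [← List.singleton_append, hanti, List.length_append, List.length_append]
    have := List.length_pos_iff.mpr (hnonerasing a)
    simp only [List.length_singleton]
    omega

theorem length_antimorphism (hanti : ∀ v₁ v₂ : List A, Θ (v₁ ++ v₂) = Θ v₂ ++ Θ v₁)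
    (hnonerasing : ∀ a : A, Θ [a] ≠ []) (hfin : ∃ k : ℕ, 1 ≤ k ∧ Θ^[k] = id) (v : List A) :
    (Θ v).length = v.length :=
  let ⟨_, hk, hΘk⟩ := hfin
  apply_eq_of_le_apply_of_iterate_eq_id (length_le_length_antimorphism hanti hnonerasing) hk hΘk v

theorem exists_palindrome_split_of_antimorphism_eq_rotate
    (hanti : ∀ v₁ v₂ : List A, Θ (v₁ ++ v₂) = Θ v₂ ++ Θ v₁)
    (hlen : ∀ v : List A, (Θ v).length = v.length) {w : List A} {n : ℕ}
    (hrot : Θ w = w.rotate n) : ∃ p s : List A, Θ p = p ∧ Θ s = s ∧ w = p ++ s := by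
  set p := w.take (n % w.length)
  set s := w.drop (n % w.length)
  have hw : w = p ++ s := (List.take_append_drop _ w).symm
  rw [List.rotate_eq_drop_append_take_mod, hw, hanti, ← hw] at hrot
  obtain ⟨hs, hp⟩ := List.append_inj hrot (hlen s)
  exact ⟨p, s, hp, hs, hw⟩

end Antimorphism

theorem OccursAt.getElem {A : Type*} {u : ℕ → A} {v : List A} {i : ℕ} (hv : OccursAt u v i)
    (k : ℕ) (hk : k < v.length) : v[k] = u (i + k) := by
  rw [List.getElem_of_eq hv hk, List.getElem_map, List.getElem_range]

theorem OccursAt.eq_rotate {A : Type*} {u : ℕ → A} {v w : List A} {i : ℕ}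
    (hv : OccursAt u v i) (hw : OccursAt u w 0) (hper : Function.Periodic u w.length)
    (hlen : v.length = w.length) : v = w.rotate i := by
  refine List.ext_getElem (by rw [List.length_rotate, hlen]) fun k hkv hkw => ?_
  rw [List.getElem_rotate, hv.getElem, hw.getElem, zero_add, hper.map_mod_nat, add_comm]

theorem periodic_closed_antimorphism_period_splits_into_palindromes_general
    {A : Type*} (w : List A)
    (u : ℕ → A)
    (hpre : OccursAt u w 0)
    (hper : ∀ n : ℕ, u (n + w.length) = u n)
    (Θ : List A → List A)
    (hanti : ∀ v₁ v₂ : List A, Θ (v₁ ++ v₂) = Θ v₂ ++ Θ v₁)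
    (hnonerasing : ∀ a : A, Θ [a] ≠ [])
    (hfin : ∃ k : ℕ, 1 ≤ k ∧ Θ^[k] = id)
    (hclosed : ∀ v : List A, IsFactor u v → IsFactor u (Θ v)) :
    ∃ p s : List A, Θ p = p ∧ Θ s = s ∧ w = p ++ s := by
  have hlen := length_antimorphism hanti hnonerasing hfin
  obtain ⟨i, hi⟩ := hclosed w ⟨0, hpre⟩
  exact exists_palindrome_split_of_antimorphism_eq_rotate hanti hlen
    (hi.eq_rotate hpre hper (hlen w))

/-- If `w` is the shortest period of the periodic word `u = w^ω`
(containing every letter of the finite alphabet `A`), and the language of `u` is closed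
under a non-erasing antimorphism `Θ` of finite order, then `w = p ++ s` where both `p`
and `s` are `Θ`-palindromes. -/
theorem periodic_closed_antimorphism_period_splits_into_palindromes
    {A : Type*} [Fintype A] (w : List A) (hw : w ≠ [])
    (u : ℕ → A)
    (hall : ∀ a : A, a ∈ w)
    (hpre : OccursAt u w 0)
    (hper : ∀ n : ℕ, u (n + w.length) = u n)
    (hmin : ∀ v : List A, v ≠ [] → OccursAt u v 0 →
      (∀ n : ℕ, u (n + v.length) = u n) → w.length ≤ v.length)
    (Θ : List A → List A)
    (hanti : ∀ v₁ v₂ : List A, Θ (v₁ ++ v₂) = Θ v₂ ++ Θ v₁)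
    (hnonerasing : ∀ a : A, Θ [a] ≠ [])
    (hfin : ∃ k : ℕ, 1 ≤ k ∧ Θ^[k] = id)
    (hclosed : ∀ v : List A, IsFactor u v → IsFactor u (Θ v)) :
    ∃ p s : List A, Θ p = p ∧ Θ s = s ∧ w = p ++ s :=
  periodic_closed_antimorphism_period_splits_into_palindromes_general w u hpre hper Θ hanti
    hnonerasing hfin hclosed
end

section
/- Let w ∈ A* be the shortest period of the periodic infinite word u = w^ω over a finite alphabet A (where every letter of A occurs in w), and suppose the language of u is closed under a non-erasing antimorphism Θ : A* → A* of finite order. Then P_Θ(n) + P_Θ(n+1) = 2 for every n ≥ |w|. -/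
open scoped Classical

namespace PCAux
variable {A : Type*}

def P (u : ℕ → A) (i m : ℕ) : List A := (List.range m).map fun t => u (i + t)

@[simp] lemma P_len (u : ℕ → A) (i m : ℕ) : (P u i m).length = m := by simp [P]

lemma P_snoc (u : ℕ → A) (i m : ℕ) : P u i (m+1) = P u i m ++ [u (i+m)] := by
  simp [P, List.range_succ]

lemma P_cons (u : ℕ → A) (i m : ℕ) : P u i (m+1) = u i :: P u (i+1) m := by
  simp only [P, List.range_succ_eq_map, List.map_cons, List.map_map]
  refine congrArg₂ _ (by rw [Nat.add_zero]) (List.map_congr_left ?_)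
  intro a _; simp [Function.comp]; ring_nf

lemma P_occurs (u : ℕ → A) (i m : ℕ) : OccursAt u (P u i m) i := by
  unfold OccursAt; rw [P_len]; rfl

lemma P_factor (u : ℕ → A) (i m : ℕ) : IsFactor u (P u i m) := ⟨i, P_occurs u i m⟩

lemma P_eq_iff {u : ℕ → A} {v : List A} {i m : ℕ} (h : v.length = m) :
    OccursAt u v i ↔ v = P u i m := by
  unfold OccursAt; rw [h]; rfl

section period
variable {N : ℕ} {u : ℕ → A}

lemma u_add_mul (hper : ∀ x, u (x + N) = u x) : ∀ k x, u (x + N * k) = u x := by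
  intro k
  induction k with
  | zero => simp
  | succ k ih =>
    intro x
    have : x + N * (k+1) = (x + N * k) + N := by ring
    rw [this, hper, ih]

lemma u_mod (hper : ∀ x, u (x + N) = u x) (x : ℕ) : u x = u (x % N) := by
  conv_lhs => rw [← Nat.mod_add_div x N]
  exact u_add_mul hper (x / N) (x % N)

lemma u_congr (hper : ∀ x, u (x + N) = u x) {x y : ℕ}
    (h : x % N = y % N) : u x = u y := by
  rw [u_mod hper x, u_mod hper y, h]

lemma P_congr (hper : ∀ x, u (x + N) = u x) {i i' : ℕ} (m : ℕ)
    (h : i % N = i' % N) : P u i m = P u i' m := by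
  unfold P
  refine List.map_congr_left fun t _ => ?_
  exact u_congr hper (Nat.ModEq.add_right t h)

lemma gcd_period (u : ℕ → A) : ∀ a : ℕ, 0 < a → ∀ b : ℕ, (∀ x, u (x + a) = u x) →
    (∀ x, u (x + b) = u x) → ∀ x, u (x + Nat.gcd a b) = u x := by
  intro a
  induction a using Nat.strong_induction_on with
  | _ a ih =>
    intro ha b hpa hpb x
    by_cases h0 : b % a = 0
    · rw [Nat.gcd_eq_left (Nat.dvd_of_mod_eq_zero h0)]; exact hpa x
    · have hba : b % a < a := Nat.mod_lt _ ha
      have hpr : ∀ y, u (y + b % a) = u y := by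
        intro y
        have hb : b % a + a * (b / a) = b := Nat.mod_add_div b a
        calc u (y + b % a) = u (y + b % a + a * (b / a)) := (u_add_mul hpa _ _).symm
        _ = u (y + b) := by rw [Nat.add_assoc, hb]
        _ = u y := hpb y
      have := ih (b % a) hba (Nat.pos_of_ne_zero h0) a hpr hpa x
      rwa [Nat.gcd_rec a b]

/-- Key injectivity lemma: occurrences of a factor of length ≥ N are unique mod N,
when N is the minimal period. -/
lemma inj_mod (hN : 0 < N) (hper : ∀ x, u (x + N) = u x)
    (hmin : ∀ v : List A, v ≠ [] → OccursAt u v 0 →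
      (∀ x : ℕ, u (x + v.length) = u x) → N ≤ v.length) :
    ∀ m, N ≤ m → ∀ i i', P u i m = P u i' m → i % N = i' % N := by
  have key : ∀ m, N ≤ m → ∀ i i', i ≤ i' → P u i m = P u i' m → i % N = i' % N := by
    intro m hm i i' hii' heq
    have hpt : ∀ t, t < m → u (i + t) = u (i' + t) := by
      intro t ht
      have h1 : (P u i m)[t]? = (P u i' m)[t]? := by rw [heq]
      simp only [P, List.getElem?_map, List.getElem?_range, ht, if_pos] at h1
      simpa using h1
    set d := i' - i with hd
    by_cases hd0 : d = 0
    · have : i = i' := by omega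
      rw [this]
    · have hdpos : 0 < d := Nat.pos_of_ne_zero hd0
      have hdper : ∀ x, u (x + d) = u x := by
        intro x
        set t := (x + N * i - i) % N with htdef
        have htN : t < N := Nat.mod_lt _ hN
        have hiN : i ≤ N * i := Nat.le_mul_of_pos_left i hN
        have hmod : (i + t) % N = x % N := by
          have h1 : (i + t) ≡ i + (x + N * i - i) [MOD N] :=
            Nat.ModEq.add_left i (Nat.mod_modEq _ N)
          have h2 : i + (x + N * i - i) = x + N * i := by omega
          have h3 : x + N * i ≡ x [MOD N] := by
            have : N * i ≡ 0 [MOD N] := (Nat.modEq_zero_iff_dvd).2 ⟨i, rfl⟩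
            simpa using (Nat.ModEq.add_left x this)
          exact (h1.trans (h2 ▸ h3) : _)
        calc u (x + d) = u ((i + t) + d) :=
              u_congr hper (by exact (Nat.ModEq.add_right d hmod).symm)
        _ = u (i' + t) := by rw [show i + t + d = i' + t by omega]
        _ = u (i + t) := (hpt t (lt_of_lt_of_le htN hm)).symm
        _ = u x := u_congr hper hmod
      set g := Nat.gcd d N with hg
      have hgper : ∀ x, u (x + g) = u x := gcd_period u d hdpos N hdper hper
      have hgpos : 0 < g := Nat.gcd_pos_of_pos_right d hN
      have hgN : g ≤ N := Nat.le_of_dvd hN (Nat.gcd_dvd_right d N)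
      have hNg : N ≤ g := by
        have := hmin (P u 0 g) ?_ (P_occurs u 0 g) ?_
        · rwa [P_len] at this
        · intro hnil
          have := congrArg List.length hnil
          simp at this; omega
        · intro x; rw [P_len]; exact hgper x
      have hgeq : g = N := le_antisymm hgN hNg
      have hdvd : N ∣ d := hgeq ▸ Nat.gcd_dvd_left d N
      obtain ⟨k, hk⟩ := hdvd
      have : i' = i + N * k := by omega
      rw [this, Nat.add_mul_mod_self_left]
  intro m hm i i' heq
  rcases le_total i i' with h | h
  · exact key m hm i i' h heq
  · exact (key m hm i' i h heq.symm).symm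

end period

section theta
variable {Θ : List A → List A}
  (hanti : ∀ v₁ v₂ : List A, Θ (v₁ ++ v₂) = Θ v₂ ++ Θ v₁)
  (hnonerasing : ∀ a : A, Θ [a] ≠ [])

include hanti in
lemma theta_cons (a : A) (v : List A) : Θ (a :: v) = Θ v ++ Θ [a] := by
  have := hanti [a] v; simpa using this

include hanti hnonerasing in
lemma theta_len_ge : ∀ v : List A, v.length ≤ (Θ v).length := by
  intro v
  induction v with
  | nil => simp
  | cons a v ih =>
    rw [theta_cons hanti, List.length_append, List.length_cons]
    have : 1 ≤ (Θ [a]).length := List.length_pos_iff.mpr (hnonerasing a)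
    omega

include hanti hnonerasing in
lemma theta_single (hfin : ∃ k : ℕ, 1 ≤ k ∧ Θ^[k] = id) (a : A) :
    ∃ b : A, Θ [a] = [b] := by
  obtain ⟨k, hk1, hkid⟩ := hfin
  obtain ⟨k', rfl⟩ : ∃ k', k = k' + 1 := ⟨k - 1, by omega⟩
  have iter_ge : ∀ j (v : List A), v.length ≤ (Θ^[j] v).length := by
    intro j
    induction j with
    | zero => intro v; simp
    | succ j ih =>
      intro v
      rw [Function.iterate_succ_apply]
      exact le_trans (theta_len_ge hanti hnonerasing v) (ih (Θ v))
  have h1 : (Θ [a]).length ≤ (Θ^[k'] (Θ [a])).length := iter_ge k' _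
  have h2 : Θ^[k'] (Θ [a]) = [a] := by
    rw [← Function.iterate_succ_apply]
    exact congrFun hkid [a]
  rw [h2] at h1
  have h3 : 1 ≤ (Θ [a]).length := theta_len_ge hanti hnonerasing [a]
  simp at h1
  exact List.length_eq_one_iff.mp (le_antisymm h1 h3)

end theta

lemma card_two_mul_eq (N t : ℕ) :
    ((Finset.range N).filter (fun i => 2*i = t)).card = if t % 2 = 0 ∧ t < 2*N then 1 else 0 := by
  split_ifs with h
  · have : (Finset.range N).filter (fun i => 2*i = t) = {t/2} := by
      ext x; simp only [Finset.mem_filter, Finset.mem_range, Finset.mem_singleton]; omega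
    rw [this]; rfl
  · have : (Finset.range N).filter (fun i => 2*i = t) = ∅ := by
      ext x; simp only [Finset.mem_filter, Finset.mem_range, Finset.notMem_empty, iff_false,
        not_and]; omega
    rw [this]; rfl

lemma card_two_mul_add_one_eq (N t : ℕ) :
    ((Finset.range N).filter (fun i => 2*i+1 = t)).card = if t % 2 = 1 ∧ t < 2*N then 1 else 0 := by
  split_ifs with h
  · have : (Finset.range N).filter (fun i => 2*i+1 = t) = {t/2} := by
      ext x; simp only [Finset.mem_filter, Finset.mem_range, Finset.mem_singleton]; omega
    rw [this]; rfl
  · have : (Finset.range N).filter (fun i => 2*i+1 = t) = ∅ := by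
      ext x; simp only [Finset.mem_filter, Finset.mem_range, Finset.notMem_empty, iff_false,
        not_and]; omega
    rw [this]; rfl

lemma mod_char {N a x : ℕ} (ha : a < N) (hx : x < 2*N) : x % N = a ↔ x = a ∨ x = a + N := by
  rcases lt_or_ge x N with h | h
  · rw [Nat.mod_eq_of_lt h]; omega
  · have h2 : x - N < N := by omega
    rw [Nat.mod_eq_sub_mod h, Nat.mod_eq_of_lt h2]; omega

lemma count_sum (N c : ℕ) (hN : 0 < N) :
    ((Finset.range N).filter (fun i => 2*i % N = c % N)).card
    + ((Finset.range N).filter (fun i => (2*i+1) % N = c % N)).card = 2 := by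
  set a := c % N with hadef
  have ha : a < N := Nat.mod_lt _ hN
  have e1 : (Finset.range N).filter (fun i => 2*i % N = a)
      = (Finset.range N).filter (fun i => 2*i = a ∨ 2*i = a + N) := by
    refine Finset.filter_congr ?_
    intro x hx
    rw [Finset.mem_range] at hx
    exact mod_char ha (by omega)
  have e2 : (Finset.range N).filter (fun i => (2*i+1) % N = a)
      = (Finset.range N).filter (fun i => 2*i+1 = a ∨ 2*i+1 = a + N) := by
    refine Finset.filter_congr ?_
    intro x hx
    rw [Finset.mem_range] at hx
    exact mod_char ha (by omega)
  rw [e1, e2, Finset.filter_or, Finset.filter_or]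
  rw [Finset.card_union_of_disjoint (by
    rw [Finset.disjoint_left]
    intro x h1 h2
    simp only [Finset.mem_filter] at h1 h2
    omega)]
  rw [Finset.card_union_of_disjoint (by
    rw [Finset.disjoint_left]
    intro x h1 h2
    simp only [Finset.mem_filter] at h1 h2
    omega)]
  rw [card_two_mul_eq, card_two_mul_eq, card_two_mul_add_one_eq, card_two_mul_add_one_eq]
  split_ifs <;> omega

end PCAux

/-- If `w` is the shortest period of the periodic word `u = w^ω`
(containing every letter of the finite alphabet `A`), and the language of `u` is closed
under a non-erasing antimorphism `Θ` of finite order, then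
`P_Θ(n) + P_Θ(n+1) = 2` for every `n ≥ |w|`. -/
theorem periodic_closed_antimorphism_palindromic_complexity
    {A : Type*} [Fintype A] (w : List A) (hw : w ≠ [])
    (u : ℕ → A)
    (hall : ∀ a : A, a ∈ w)
    (hpre : OccursAt u w 0)
    (hper : ∀ n : ℕ, u (n + w.length) = u n)
    (hmin : ∀ v : List A, v ≠ [] → OccursAt u v 0 →
      (∀ n : ℕ, u (n + v.length) = u n) → w.length ≤ v.length)
    (Θ : List A → List A)
    (hanti : ∀ v₁ v₂ : List A, Θ (v₁ ++ v₂) = Θ v₂ ++ Θ v₁)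
    (hnonerasing : ∀ a : A, Θ [a] ≠ [])
    (hfin : ∃ k : ℕ, 1 ≤ k ∧ Θ^[k] = id)
    (hclosed : ∀ v : List A, IsFactor u v → IsFactor u (Θ v))
    (n : ℕ) (hn : w.length ≤ n) :
    Set.ncard {v : List A | v.length = n ∧ IsFactor u v ∧ Θ v = v} +
      Set.ncard {v : List A | v.length = n + 1 ∧ IsFactor u v ∧ Θ v = v} = 2 := by
    classical
  open PCAux in
  set N := w.length with hNdef
  have hN : 0 < N := List.length_pos_iff.mpr hw
  -- the letter map θ
  choose θ hθ using PCAux.theta_single hanti hnonerasing hfin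
  have theta_len : ∀ v : List A, (Θ v).length = v.length := by
    intro v
    induction v with
    | nil =>
      have h0 := hanti [] []
      simp only [List.append_nil] at h0
      have hl := congrArg List.length h0
      rw [List.length_append] at hl
      have hz : (Θ ([]:List A)).length = 0 := by omega
      simpa using hz
    | cons a v ih =>
      rw [PCAux.theta_cons hanti, List.length_append, hθ, ih]
      simp
  have hinj := PCAux.inj_mod hN hper hmin
  have factor_char : ∀ (v : List A) (m : ℕ), v.length = m → IsFactor u v →
      ∃ i, i < N ∧ v = PCAux.P u i m := by
    rintro v m hlen ⟨i₀, hocc⟩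
    refine ⟨i₀ % N, Nat.mod_lt _ hN, ?_⟩
    rw [(PCAux.P_eq_iff hlen).mp hocc]
    exact PCAux.P_congr hper m (Nat.mod_mod_of_dvd i₀ dvd_rfl).symm
  have exj : ∀ (m : ℕ) (i : ℕ), ∃ j, j < N ∧ Θ (PCAux.P u i m) = PCAux.P u j m := by
    intro m i
    have hfac : IsFactor u (Θ (PCAux.P u i m)) := hclosed _ (PCAux.P_factor u i m)
    have hlen : (Θ (PCAux.P u i m)).length = m := by rw [theta_len, PCAux.P_len]
    obtain ⟨j, hj, hje⟩ := factor_char _ m hlen hfac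
    exact ⟨j, hj, hje.symm ▸ hje⟩
  choose j1 hj1lt hj1 using fun i => exj n i
  choose j2 hj2lt hj2 using fun i => exj (n+1) i
  have relA : ∀ i, (j2 i + 1) % N = j1 i % N := by
    intro i
    have h1 : Θ (PCAux.P u i (n+1)) = θ (u (i+n)) :: PCAux.P u (j1 i) n := by
      rw [PCAux.P_snoc, hanti, hθ, hj1]; rfl
    have h2 : Θ (PCAux.P u i (n+1)) = u (j2 i) :: PCAux.P u (j2 i + 1) n := by
      rw [hj2, PCAux.P_cons]
    have h3 : PCAux.P u (j2 i + 1) n = PCAux.P u (j1 i) n := by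
      have h := h1.symm.trans h2
      simp only [List.cons.injEq] at h
      exact h.2.symm
    exact hinj n hn _ _ h3
  have relB : ∀ i, j1 (i+1) = j2 i := by
    intro i
    have h1 : Θ (PCAux.P u i (n+1)) = PCAux.P u (j1 (i+1)) n ++ [θ (u i)] := by
      rw [PCAux.P_cons,
        show u i :: PCAux.P u (i+1) n = [u i] ++ PCAux.P u (i+1) n from rfl,
        hanti, hθ, hj1]
    have h2 : Θ (PCAux.P u i (n+1)) = PCAux.P u (j2 i) n ++ [u (j2 i + n)] := by
      rw [hj2, PCAux.P_snoc]
    have h3 : PCAux.P u (j1 (i+1)) n = PCAux.P u (j2 i) n := by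
      have h := h1.symm.trans h2
      have hl : (PCAux.P u (j1 (i+1)) n).length = (PCAux.P u (j2 i) n).length := by simp
      exact (List.append_inj h hl).1
    have h4 := hinj n hn _ _ h3
    rwa [Nat.mod_eq_of_lt (hj1lt _), Nat.mod_eq_of_lt (hj2lt _)] at h4
  set c := j1 0 with hc
  have key1 : ∀ i, (j1 i + i) % N = c % N := by
    intro i
    induction i with
    | zero => rfl
    | succ i ih =>
      have hA : Nat.ModEq N (j2 i + 1) (j1 i) := relA i
      have hstep : (j1 (i+1) + (i+1)) % N = (j1 i + i) % N := by
        rw [show j1 (i+1) + (i+1) = (j2 i + 1) + i by rw [relB i]; omega]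
        exact hA.add_right i
      rw [hstep, ih]
  have key2 : ∀ i, (j2 i + (i+1)) % N = c % N := by
    intro i
    have h := key1 (i+1)
    rwa [relB i] at h
  have pal1 : ∀ i, i < N → (Θ (PCAux.P u i n) = PCAux.P u i n ↔ 2*i % N = c % N) := by
    intro i hi
    constructor
    · intro hfix
      have h1 : PCAux.P u (j1 i) n = PCAux.P u i n := by rw [← hj1 i, hfix]
      have h2 := hinj n hn _ _ h1
      rw [Nat.mod_eq_of_lt (hj1lt i), Nat.mod_eq_of_lt hi] at h2
      have h := key1 i
      rw [h2] at h
      rw [show 2*i = i + i by ring]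
      exact h
    · intro h2i
      have hk := key1 i
      have hji : j1 i % N = i % N := by
        have h1 : Nat.ModEq N (j1 i + i) (i + i) := by
          have : (j1 i + i) % N = (i + i) % N := by
            rw [hk, ← h2i, two_mul]
          exact this
        exact h1.add_right_cancel' i
      rw [Nat.mod_eq_of_lt (hj1lt i), Nat.mod_eq_of_lt hi] at hji
      rw [hj1 i, hji]
  have pal2 : ∀ i, i < N →
      (Θ (PCAux.P u i (n+1)) = PCAux.P u i (n+1) ↔ (2*i+1) % N = c % N) := by
    intro i hi
    have hn1 : N ≤ n + 1 := by omega
    constructor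
    · intro hfix
      have h1 : PCAux.P u (j2 i) (n+1) = PCAux.P u i (n+1) := by rw [← hj2 i, hfix]
      have h2 := hinj (n+1) hn1 _ _ h1
      rw [Nat.mod_eq_of_lt (hj2lt i), Nat.mod_eq_of_lt hi] at h2
      have h := key2 i
      rw [h2] at h
      rw [show 2*i+1 = i + (i+1) by ring]
      exact h
    · intro h2i
      have hk := key2 i
      have hji : j2 i % N = i % N := by
        have h1 : Nat.ModEq N (j2 i + (i+1)) (i + (i+1)) := by
          have : (j2 i + (i+1)) % N = (i + (i+1)) % N := by
            rw [hk, ← h2i]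
            congr 1
            ring
          exact this
        exact h1.add_right_cancel' (i+1)
      rw [Nat.mod_eq_of_lt (hj2lt i), Nat.mod_eq_of_lt hi] at hji
      rw [hj2 i, hji]
  have hset1 : {v : List A | v.length = n ∧ IsFactor u v ∧ Θ v = v}
      = ↑(((Finset.range N).filter (fun i => 2*i % N = c % N)).image
          (fun i => PCAux.P u i n)) := by
    ext v
    simp only [Set.mem_setOf_eq, Finset.coe_image, Set.mem_image, Finset.mem_coe,
      Finset.mem_filter, Finset.mem_range]
    constructor
    · rintro ⟨hlen, hfac, hpal⟩
      obtain ⟨i, hiN, hv⟩ := factor_char v n hlen hfac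
      refine ⟨i, ⟨hiN, (pal1 i hiN).1 ?_⟩, hv.symm⟩
      rw [← hv]; exact hpal
    · rintro ⟨i, ⟨hiN, hcond⟩, rfl⟩
      exact ⟨PCAux.P_len u i n, PCAux.P_factor u i n, (pal1 i hiN).2 hcond⟩
  have hset2 : {v : List A | v.length = n + 1 ∧ IsFactor u v ∧ Θ v = v}
      = ↑(((Finset.range N).filter (fun i => (2*i+1) % N = c % N)).image
          (fun i => PCAux.P u i (n+1))) := by
    ext v
    simp only [Set.mem_setOf_eq, Finset.coe_image, Set.mem_image, Finset.mem_coe,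
      Finset.mem_filter, Finset.mem_range]
    constructor
    · rintro ⟨hlen, hfac, hpal⟩
      obtain ⟨i, hiN, hv⟩ := factor_char v (n+1) hlen hfac
      refine ⟨i, ⟨hiN, (pal2 i hiN).1 ?_⟩, hv.symm⟩
      rw [← hv]; exact hpal
    · rintro ⟨i, ⟨hiN, hcond⟩, rfl⟩
      exact ⟨PCAux.P_len u i (n+1), PCAux.P_factor u i (n+1), (pal2 i hiN).2 hcond⟩
  have hcard1 : Set.ncard {v : List A | v.length = n ∧ IsFactor u v ∧ Θ v = v}
      = ((Finset.range N).filter (fun i => 2*i % N = c % N)).card := by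
    rw [hset1, Set.ncard_coe_finset]
    apply Finset.card_image_of_injOn
    intro i hi i' hi' hPP
    simp only [Finset.coe_filter, Set.mem_setOf_eq, Finset.mem_range] at hi hi'
    have h := hinj n hn _ _ hPP
    rwa [Nat.mod_eq_of_lt hi.1, Nat.mod_eq_of_lt hi'.1] at h
  have hcard2 : Set.ncard {v : List A | v.length = n + 1 ∧ IsFactor u v ∧ Θ v = v}
      = ((Finset.range N).filter (fun i => (2*i+1) % N = c % N)).card := by
    rw [hset2, Set.ncard_coe_finset]
    apply Finset.card_image_of_injOn
    intro i hi i' hi' hPP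
    simp only [Finset.coe_filter, Set.mem_setOf_eq, Finset.mem_range] at hi hi'
    have h := hinj (n+1) (by omega) _ _ hPP
    rwa [Nat.mod_eq_of_lt hi.1, Nat.mod_eq_of_lt hi'.1] at h
  rw [hcard1, hcard2]
  exact PCAux.count_sum N c hN
end

section
/- Let Θ₁ and Θ₂ be two distinct commuting involutive antimorphisms of A* for a finite alphabet A, and let u be a uniformly recurrent infinite word over A. Then there exists an integer N such that no factor of u of length greater than N is simultaneously a Θ₁-palindrome and a Θ₂-palindrome, i.e., #{ w ∈ L_n(u) : w = Θ₁(w) = Θ₂(w) } = 0 for all n > N. -/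
open scoped Classical

/-- `u` is uniformly recurrent: every factor occurs infinitely many times with
bounded gaps between consecutive occurrences. -/
def UniformlyRecurrent {A : Type*} (u : ℕ → A) : Prop :=
  ∀ w : List A, IsFactor u w →
    ∃ B : ℕ, ∀ i : ℕ, ∃ j : ℕ, i ≤ j ∧ j ≤ i + B ∧ OccursAt u w j

/-- If `Θ₁`, `Θ₂` are two distinct commuting involutive antimorphisms
and `u` is uniformly recurrent, then there is `N` such that no factor of `u` of length
`> N` is simultaneously a `Θ₁`-palindrome and a `Θ₂`-palindrome. -/
theorem no_long_double_palindromes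
    {A : Type*} [Fintype A] (θ₁ θ₂ : A → A)
    (h₁ : Function.Involutive θ₁) (h₂ : Function.Involutive θ₂)
    (hne : θ₁ ≠ θ₂) (hcomm : θ₁ ∘ θ₂ = θ₂ ∘ θ₁)
    (u : ℕ → A) (hall : ∀ a : A, ∃ i, u i = a)
    (hur : UniformlyRecurrent u) :
    ∃ N : ℕ, ∀ n : ℕ, N < n →
      {w : List A | w.length = n ∧ IsFactor u w ∧ IsPalin θ₁ w ∧ IsPalin θ₂ w} = ∅ := by
  have map_eq_self : ∀ (f : A → A) (l : List A), l.map f = l → ∀ x ∈ l, f x = x := by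
    intro f l
    induction l with
    | nil => simp
    | cons c t ih =>
      intro h x hx
      simp only [List.map_cons, List.cons.injEq] at h
      rcases List.mem_cons.mp hx with rfl | hxt
      · exact h.1
      · exact ih h.2 x hxt
  obtain ⟨a, ha⟩ := Function.ne_iff.mp hne
  set b := θ₂ a with hbdef
  have hfix : θ₁ (θ₂ b) ≠ b := by rw [hbdef, h₂ a]; exact ha
  obtain ⟨i₀, hi₀⟩ := hall b
  have hfac : IsFactor u [b] := ⟨i₀, by simp [OccursAt, List.range_succ, hi₀]⟩
  obtain ⟨B, hB⟩ := hur [b] hfac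
  refine ⟨B, fun n hn => ?_⟩
  ext w
  simp only [Set.mem_setOf_eq, Set.mem_empty_iff_false, iff_false]
  rintro ⟨hlen, ⟨i, hocc⟩, hp1, hp2⟩
  have hmap : w.map (θ₁ ∘ θ₂) = w := by
    have h : antim θ₁ (antim θ₂ w) = w := by rw [hp2]; exact hp1
    simpa [antim, List.map_reverse, List.map_map] using h
  obtain ⟨j, hij, hjB, hoccb⟩ := hB i
  have hub : u j = b := by
    have h := hoccb
    simp [OccursAt, List.range_succ] at h
    exact h.symm
  have hbw : b ∈ w := by
    rw [hocc]
    refine List.mem_map.mpr ⟨j - i, List.mem_range.mpr ?_, ?_⟩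
    · rw [hlen]; omega
    · rw [show i + (j - i) = j by omega, hub]
  have := map_eq_self _ _ hmap b hbw
  exact hfix this
end

section
/- Let R be the reversal antimorphism and E the exchange antimorphism of {0,1}* (E(0) = 1, E(1) = 0, composed with reversal). The only infinite words over the alphabet {0,1} that are simultaneously R-rich and E-rich are (01)^ω and (10)^ω. -/
open scoped Classical

lemma gamma_aa (a : Bool) : gammaTheta Bool.not [a, a] = 1 := by
  unfold gammaTheta
  have h : {s : Set Bool | ∃ b ∈ [a, a], Bool.not b ≠ b ∧ s = {b, Bool.not b}} =
      {({a, !a} : Set Bool)} := by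
    ext s
    simp only [Set.mem_setOf_eq, Set.mem_singleton_iff, List.mem_cons,
      List.not_mem_nil, or_false]
    constructor
    · rintro ⟨b, hb, -, rfl⟩
      have : b = a := by tauto
      subst this; rfl
    · rintro rfl
      exact ⟨a, Or.inl rfl, by simp, rfl⟩
  rw [h, Set.ncard_singleton]

lemma pal_aa (a : Bool) : palFactors Bool.not [a, a] = {([] : List Bool)} := by
  ext p
  simp only [palFactors, Set.mem_setOf_eq, Set.mem_singleton_iff]
  constructor
  · rintro ⟨hinf, hpal⟩
    by_contra hne
    obtain ⟨x, hx⟩ := List.exists_mem_of_ne_nil p hne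
    have hxa : x = a := by
      have := hinf.subset hx
      simp only [List.mem_cons, List.not_mem_nil, or_false] at this
      tauto
    have hx' : x ∈ antim Bool.not p := by rw [hpal]; exact hx
    simp only [antim, List.mem_reverse, List.mem_map] at hx'
    obtain ⟨y, hy, hyx⟩ := hx'
    have hya : y = a := by
      have := hinf.subset hy
      simp only [List.mem_cons, List.not_mem_nil, or_false] at this
      tauto
    rw [hya, hxa] at hyx
    simp at hyx
  · rintro rfl
    exact ⟨List.nil_infix, rfl⟩

lemma defect_aa (a : Bool) : defect Bool.not [a, a] = 1 := by
  unfold defect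
  rw [gamma_aa, pal_aa, Set.ncard_singleton]
  simp

/-- The only infinite words over `{0,1}` (in which both letters occur)
that are simultaneously `R`-rich and `E`-rich — where `R = antim id` is the reversal
antimorphism and `E = antim Bool.not` the exchange antimorphism — are
`(01)^ω` and `(10)^ω` (`false = 0`, `true = 1`). -/
theorem doubly_rich_binary_words_are_01_periodic
    (u : ℕ → Bool)
    (hall₀ : ∃ i, u i = false) (hall₁ : ∃ i, u i = true)
    (hrichR : ∀ w : List Bool, IsFactor u w → defect id w = 0)
    (hrichE : ∀ w : List Bool, IsFactor u w → defect Bool.not w = 0) :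
    (∀ n : ℕ, u n = (n % 2 == 1)) ∨ (∀ n : ℕ, u n = (n % 2 == 0)) := by
  have hstep : ∀ n, u (n + 1) = ! u n := by
    intro n
    by_contra h
    have heq : u (n + 1) = u n := by
      cases hn : u n <;> cases hn1 : u (n + 1) <;> simp_all
    have hfac : IsFactor u [u n, u n] := by
      refine ⟨n, ?_⟩
      show [u n, u n] = (List.range 2).map fun k => u (n + k)
      simp [List.range_succ, heq]
    have := hrichE _ hfac
    rw [defect_aa] at this
    exact one_ne_zero this
  have key : ∀ n, u n = (u 0).xor (n % 2 == 1) := by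
    intro n
    induction n with
    | zero => simp
    | succ n ih =>
      rw [hstep, ih]
      rcases Nat.mod_two_eq_zero_or_one n with h | h
      · have : (n + 1) % 2 = 1 := by omega
        simp [h, this, Bool.xor_comm]
      · have : (n + 1) % 2 = 0 := by omega
        simp [h, this, Bool.xor_comm]
  cases h0 : u 0 with
  | false => left; intro n; rw [key n, h0]; simp
  | true => right; intro n; rw [key n, h0]
            rcases Nat.mod_two_eq_zero_or_one n with h | h <;> simp [h]
end
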